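/- arXiv:2104.11179 — 12 statements merged into one kernel-verified Lean document; each statement's English description precedes it below -/
import Mathlib

section
/- A set S ⊆ E × ℝ₊₊ is convex if and only if its radial set transformation ΓS is convex. -/
/-! `Γ` is an involution of the open half-space `u > 0` which maps segments onto segments: the
point `a • Γ p + b • Γ q` is the image of the point of `[p, q]` with weights proportional to
`a * q.2` and `b * p.2`. Hence `Γ` preserves convexity, and applying this to `ΓS`, whose image
is `S` again, gives the converse. -/

open Set
open scoped ENNReal RealInnerProductSpace

noncomputable section

variable {E : Type*} [NormedAddCommGroup E] [InnerProductSpace ℝ E] [FiniteDimensional ℝ E]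

/-- The radial point transformation `Γ(x,u) = (x/u, 1/u)`. -/
def radialPoint (p : E × ℝ) : E × ℝ := (p.2⁻¹ • p.1, p.2⁻¹)

/-- The radial set transformation `ΓS = {Γ(x,u) : (x,u) ∈ S}`. -/
def radialSet (S : Set (E × ℝ)) : Set (E × ℝ) := radialPoint '' S

section

omit [FiniteDimensional ℝ E]

theorem radialPoint_radialPoint {p : E × ℝ} (hp : 0 < p.2) : radialPoint (radialPoint p) = p := by
  simp [radialPoint, smul_smul, mul_inv_cancel₀ hp.ne']

theorem radialSet_radialSet {S : Set (E × ℝ)} (hS : ∀ p ∈ S, 0 < p.2) :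
    radialSet (radialSet S) = S := by
  rw [radialSet, radialSet, image_image]
  exact (image_congr fun p hp ↦ radialPoint_radialPoint (hS p hp)).trans (image_id S)

theorem radialSet_pos {S : Set (E × ℝ)} (hS : ∀ p ∈ S, 0 < p.2) :
    ∀ p ∈ radialSet S, 0 < p.2 := by
  rintro _ ⟨q, hq, rfl⟩
  exact inv_pos.mpr (hS q hq)

theorem radialPoint_smul_add_smul {p q : E × ℝ} (hp : 0 < p.2) (hq : 0 < q.2) {a b : ℝ}
    (hd : a * q.2 + b * p.2 ≠ 0) (hab : a + b = 1) :
    radialPoint ((a * q.2 / (a * q.2 + b * p.2)) • p + (b * p.2 / (a * q.2 + b * p.2)) • q) =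
      a • radialPoint p + b • radialPoint q := by
  obtain ⟨x, u⟩ := p
  obtain ⟨y, v⟩ := q
  set d := a * v + b * u with hd_def
  simp only at hp hq hd ⊢
  have hlast : a * v / d * u + b * u / d * v = u * v / d := by
    field_simp
    linear_combination hab
  have hinv : (u * v / d)⁻¹ = a * u⁻¹ + b * v⁻¹ := by
    field_simp
    linear_combination hd_def
  simp only [radialPoint, Prod.smul_mk, Prod.mk_add_mk, smul_eq_mul, hlast, hinv, smul_add,
    smul_smul]
  congr 3 <;> rw [← hinv] <;> field_simp

theorem segment_radialPoint_subset_image {p q : E × ℝ} (hp : 0 < p.2) (hq : 0 < q.2) :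
    segment ℝ (radialPoint p) (radialPoint q) ⊆ radialPoint '' segment ℝ p q := by
  rintro _ ⟨a, b, ha, hb, hab, rfl⟩
  have hd : 0 < a * q.2 + b * p.2 := by
    rcases ha.eq_or_lt with rfl | ha
    · rw [zero_add] at hab
      simpa [hab] using hp
    · positivity
  refine ⟨_, ⟨a * q.2 / (a * q.2 + b * p.2), b * p.2 / (a * q.2 + b * p.2), by positivity,
    by positivity, by field_simp, rfl⟩, radialPoint_smul_add_smul hp hq hd.ne' hab⟩

theorem Convex.radialSet {S : Set (E × ℝ)} (hS : ∀ p ∈ S, 0 < p.2) (hc : Convex ℝ S) :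
    Convex ℝ (radialSet S) := by
  rw [convex_iff_segment_subset]
  rintro _ ⟨p, hp, rfl⟩ _ ⟨q, hq, rfl⟩
  exact (segment_radialPoint_subset_image (hS p hp) (hS q hq)).trans
    (image_mono (hc.segment_subset hp hq))

end

/-- A set `S ⊆ E × ℝ₊₊` is convex if and only if `ΓS` is convex. -/
theorem radialSet_convex_iff (S : Set (E × ℝ)) (hS : ∀ p ∈ S, 0 < p.2) :
    Convex ℝ S ↔ Convex ℝ (radialSet S) := by
  refine ⟨Convex.radialSet hS, fun h ↦ ?_⟩
  simpa only [radialSet_radialSet hS] using h.radialSet (radialSet_pos hS)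
end
end

section
/- Let (x,u) ∈ E × ℝ₊₊ and (ζ,δ) ∈ E × ℝ, and let S = {(x',u') ∈ E × ℝ₊₊ : ⟨ζ, x'−x⟩ + δ(u'−u) ≤ 0}. Then, with (y,v) = Γ(x,u), the radial set transformation of S is the halfspace ΓS = {(y',v') ∈ E × ℝ₊₊ : ⟨ζ, y'−y⟩ − (⟨ζ,x⟩ + δu)(v'−v) ≤ 0}. Consequently, a subset of E × ℝ₊₊ is the intersection of a closed halfspace with E × ℝ₊₊ if and only if its radial set transformation is. -/
open Set
open scoped ENNReal RealInnerProductSpace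

noncomputable section

variable {E : Type*} [NormedAddCommGroup E] [InnerProductSpace ℝ E] [FiniteDimensional ℝ E]

/-- `S` is the intersection of a closed halfspace (with nonzero normal `w = (ζ, δ)`)
with `E × ℝ₊₊`. -/
def IsHalfspaceInter (S : Set (E × ℝ)) : Prop :=
  ∃ w : E × ℝ, w ≠ 0 ∧ ∃ c : ℝ,
    S = {p : E × ℝ | 0 < p.2 ∧ ⟪w.1, p.1⟫ + w.2 * p.2 ≤ c}

lemma radial_aux {t : ℝ} (a b c : ℝ) (ht : 0 < t) :
    a + b * t ≤ c ↔ t⁻¹ * a + (-c) * t⁻¹ ≤ -b := by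
  rw [show t⁻¹ * a + (-c) * t⁻¹ = (a - c) / t from by rw [div_eq_mul_inv]; ring,
    div_le_iff₀ ht]
  constructor <;> intro h <;> nlinarith

lemma radialPoint_invol (p : E × ℝ) (hp : 0 < p.2) : radialPoint (radialPoint p) = p := by
  simp only [radialPoint, inv_inv, smul_smul, mul_inv_cancel₀ hp.ne', one_smul]

lemma radialSet_invol (S : Set (E × ℝ)) (hS : ∀ p ∈ S, 0 < p.2) :
    radialSet (radialSet S) = S := by
  ext p
  constructor
  · rintro ⟨q, ⟨r, hr, rfl⟩, rfl⟩
    rwa [radialPoint_invol r (hS r hr)]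
  · intro hp
    exact ⟨radialPoint p, ⟨p, hp, rfl⟩, radialPoint_invol p (hS p hp)⟩

lemma radialSet_upper : radialSet {p : E × ℝ | 0 < p.2} = {p : E × ℝ | 0 < p.2} := by
  ext p
  constructor
  · rintro ⟨q, hq, rfl⟩
    simp only [mem_setOf_eq] at hq ⊢
    exact inv_pos.mpr hq
  · intro hp
    simp only [mem_setOf_eq] at hp
    exact ⟨radialPoint p, inv_pos.mpr hp, radialPoint_invol p hp⟩

lemma radialSet_halfspace_eq (ζ : E) (δ c : ℝ) :
    radialSet {p : E × ℝ | 0 < p.2 ∧ ⟪ζ, p.1⟫ + δ * p.2 ≤ c} =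
      {p : E × ℝ | 0 < p.2 ∧ ⟪ζ, p.1⟫ + (-c) * p.2 ≤ -δ} := by
  ext p
  constructor
  · rintro ⟨q, ⟨hq, hqle⟩, rfl⟩
    refine ⟨inv_pos.mpr hq, ?_⟩
    simp only [radialPoint, real_inner_smul_right]
    exact (radial_aux _ δ c hq).mp hqle
  · rintro ⟨hp, hple⟩
    refine ⟨radialPoint p, ⟨inv_pos.mpr hp, ?_⟩, radialPoint_invol p hp⟩
    simp only [radialPoint, real_inner_smul_right]
    have := (radial_aux (⟪ζ, p.1⟫) (-c) (-δ) hp).mp hple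
    simpa using this
  -- note: reverse direction uses aux with roles swapped

lemma isHalfspaceInter_radialSet {S : Set (E × ℝ)} (h : IsHalfspaceInter S) :
    IsHalfspaceInter (radialSet S) := by
  obtain ⟨⟨ζ, δ⟩, hw, c, rfl⟩ := h
  by_cases hzc : ζ = 0 ∧ c = 0
  · obtain ⟨rfl, rfl⟩ := hzc
    have hδ : δ ≠ 0 := by simpa [Prod.ext_iff] using hw
    rcases lt_or_gt_of_ne hδ with hneg | hpos
    · -- S = upper halfplane
      have hSeq : {p : E × ℝ | 0 < p.2 ∧ ⟪(0 : E), p.1⟫ + δ * p.2 ≤ 0} =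
          {p : E × ℝ | 0 < p.2} := by
        ext p
        simp only [mem_setOf_eq, inner_zero_left, zero_add]
        exact ⟨fun h => h.1, fun h => ⟨h, by nlinarith⟩⟩
      rw [hSeq, radialSet_upper]
      refine ⟨((0 : E), -1), by simp [Prod.ext_iff], 0, ?_⟩
      ext p
      simp only [mem_setOf_eq, inner_zero_left, zero_add]
      constructor
      · intro hp; exact ⟨hp, by linarith⟩
      · intro hp; exact hp.1
    · -- S = ∅
      have hSeq : {p : E × ℝ | 0 < p.2 ∧ ⟪(0 : E), p.1⟫ + δ * p.2 ≤ 0} = (∅ : Set (E × ℝ)) := by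
        ext p
        simp only [mem_setOf_eq, inner_zero_left, zero_add, mem_empty_iff_false, iff_false,
          not_and, not_le]
        intro hp; positivity
      rw [hSeq]
      refine ⟨((0 : E), 1), by simp [Prod.ext_iff], 0, ?_⟩
      simp only [radialSet, image_empty]
      ext p
      simp only [mem_empty_iff_false, mem_setOf_eq, false_iff, not_and, not_le, one_mul,
        inner_zero_left, zero_add]
      intro hp; exact hp
  · refine ⟨(ζ, -c), fun h' => hzc ?_, -δ, radialSet_halfspace_eq ζ δ c⟩
    rw [Prod.ext_iff] at h'
    exact ⟨h'.1, neg_eq_zero.mp (by simpa using h'.2)⟩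

/-- The radial transformation of a halfspace through `(x,u) ∈ E × ℝ₊₊` with normal `(ζ,δ)`
is the halfspace through `(y,v) = Γ(x,u)` with normal `(ζ, −(⟨ζ,x⟩ + δu))`; and a subset of
`E × ℝ₊₊` is the intersection of a closed halfspace with `E × ℝ₊₊` iff its radial set
transformation is. -/
theorem radialSet_halfspace (x : E) (u : ℝ) (hu : 0 < u) (ζ : E) (δ : ℝ) :
    radialSet {p : E × ℝ | 0 < p.2 ∧ ⟪ζ, p.1 - x⟫ + δ * (p.2 - u) ≤ 0} =
      {p : E × ℝ | 0 < p.2 ∧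
        ⟪ζ, p.1 - u⁻¹ • x⟫ - (⟪ζ, x⟫ + δ * u) * (p.2 - u⁻¹) ≤ 0} ∧
    ∀ S : Set (E × ℝ), (∀ p ∈ S, 0 < p.2) →
      (IsHalfspaceInter S ↔ IsHalfspaceInter (radialSet S)) := by
  constructor
  · have h1 : {p : E × ℝ | 0 < p.2 ∧ ⟪ζ, p.1 - x⟫ + δ * (p.2 - u) ≤ 0} =
        {p : E × ℝ | 0 < p.2 ∧ ⟪ζ, p.1⟫ + δ * p.2 ≤ ⟪ζ, x⟫ + δ * u} := by
      ext p
      simp only [mem_setOf_eq, inner_sub_right]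
      constructor
      · rintro ⟨hp, h⟩; exact ⟨hp, by linarith⟩
      · rintro ⟨hp, h⟩; exact ⟨hp, by linarith⟩
    rw [h1, radialSet_halfspace_eq]
    ext p
    have hd : u⁻¹ * (δ * u) = δ := by field_simp
    simp only [mem_setOf_eq, inner_sub_right, real_inner_smul_right]
    constructor
    · rintro ⟨hp, h⟩; exact ⟨hp, by nlinarith [hd, h]⟩
    · rintro ⟨hp, h⟩; exact ⟨hp, by nlinarith [hd, h]⟩
  · intro S hS
    constructor
    · exact isHalfspaceInter_radialSet
    · intro h
      have := isHalfspaceInter_radialSet h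
      rwa [radialSet_invol S hS] at this
end
end

section
/- Suppose S ⊆ E × ℝ₊₊ is an ellipsoid, i.e. S = {p ∈ E × ℝ : ⟨H(p − c), p − c⟩ ≤ 1} for some center c ∈ E × ℝ and some positive definite self-adjoint linear map H on E × ℝ. Then ΓS is also an ellipsoid contained in E × ℝ₊₊: there exist c' ∈ E × ℝ₊₊ and a positive definite self-adjoint linear map H' on E × ℝ with ΓS = {p ∈ E × ℝ : ⟨H'(p − c'), p − c'⟩ ≤ 1}. -/
open Set
open scoped ENNReal RealInnerProductSpace

noncomputable section

variable {E : Type*} [NormedAddCommGroup E] [InnerProductSpace ℝ E] [FiniteDimensional ℝ E]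

/-- The Euclidean inner product on `E × ℝ`. -/
def iprod (p q : E × ℝ) : ℝ := ⟪p.1, q.1⟫ + p.2 * q.2

lemma iprod_comm (p q : E × ℝ) : iprod p q = iprod q p := by
  simp [iprod, real_inner_comm, mul_comm]

lemma iprod_add_left (p q r : E × ℝ) : iprod (p + q) r = iprod p r + iprod q r := by
  simp [iprod, inner_add_left]; ring

lemma iprod_sub_left (p q r : E × ℝ) : iprod (p - q) r = iprod p r - iprod q r := by
  simp [iprod, inner_sub_left]; ring

lemma iprod_smul_left (t : ℝ) (p q : E × ℝ) : iprod (t • p) q = t * iprod p q := by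
  simp [iprod, real_inner_smul_left]; ring

lemma iprod_zero_left (q : E × ℝ) : iprod 0 q = 0 := by simp [iprod]

lemma iprod_add_right (p q r : E × ℝ) : iprod p (q + r) = iprod p q + iprod p r := by
  rw [iprod_comm, iprod_add_left, iprod_comm q p, iprod_comm r p]

lemma iprod_sub_right (p q r : E × ℝ) : iprod p (q - r) = iprod p q - iprod p r := by
  rw [iprod_comm, iprod_sub_left, iprod_comm q p, iprod_comm r p]

lemma iprod_smul_right (t : ℝ) (p q : E × ℝ) : iprod p (t • q) = t * iprod p q := by
  rw [iprod_comm, iprod_smul_left, iprod_comm]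

lemma iprod_neg_right (p q : E × ℝ) : iprod p (-q) = - iprod p q := by
  simp [iprod]; ring

/-- `auxL c p = (p.1, 0) - p.2 • c`. -/
def auxL (c : E × ℝ) : (E × ℝ) →ₗ[ℝ] (E × ℝ) :=
  (LinearMap.inl ℝ E ℝ).comp (LinearMap.fst ℝ E ℝ) - (LinearMap.snd ℝ E ℝ).smulRight c

lemma auxL_apply (c p : E × ℝ) : auxL c p = (p.1, 0) - p.2 • c := rfl

/-- Adjoint of `auxL` w.r.t. `iprod`. -/
def auxLstar (c : E × ℝ) : (E × ℝ) →ₗ[ℝ] (E × ℝ) :=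
  (LinearMap.inl ℝ E ℝ).comp (LinearMap.fst ℝ E ℝ) -
    (LinearMap.inr ℝ E ℝ).comp
      (((innerSL ℝ c.1).toLinearMap).comp (LinearMap.fst ℝ E ℝ) + c.2 • LinearMap.snd ℝ E ℝ)

lemma iprod_auxLstar (c r q : E × ℝ) : iprod (auxLstar c r) q = iprod r (auxL c q) := by
  simp [auxLstar, auxL, iprod, inner_sub_right, real_inner_smul_right, real_inner_comm,
    inner_sub_left, real_inner_smul_left]
  ring

def auxA (c : E × ℝ) (H : (E × ℝ) →ₗ[ℝ] (E × ℝ)) : (E × ℝ) →ₗ[ℝ] (E × ℝ) :=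
  ((auxLstar c).comp H).comp (auxL c) - (LinearMap.inr ℝ E ℝ).comp (LinearMap.snd ℝ E ℝ)

lemma iprod_auxA (c : E × ℝ) (H : (E × ℝ) →ₗ[ℝ] (E × ℝ)) (p q : E × ℝ) :
    iprod (auxA c H p) q = iprod (H (auxL c p)) (auxL c q) - p.2 * q.2 := by
  have : auxA c H p = auxLstar c (H (auxL c p)) - (0, p.2) := rfl
  rw [this, iprod_sub_left, iprod_auxLstar]
  simp [iprod]

lemma iprod_neg_left (p q : E × ℝ) : iprod (-p) q = - iprod p q := by
  simp [iprod]; ring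

lemma radialPoint_invol_s2 (q : E × ℝ) (h : q.2 ≠ 0) : radialPoint (radialPoint q) = q := by
  have h1 : radialPoint (radialPoint q) = ((q.2⁻¹)⁻¹ • (q.2⁻¹ • q.1), (q.2⁻¹)⁻¹) := rfl
  rw [h1, inv_inv, smul_smul, mul_inv_cancel₀ h, one_smul]

/-- The radial set transformation of an ellipsoid `S ⊆ E × ℝ₊₊` is again an ellipsoid
contained in `E × ℝ₊₊`. -/
theorem radialSet_ellipsoid (S : Set (E × ℝ)) (c : E × ℝ) (H : (E × ℝ) →ₗ[ℝ] (E × ℝ))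
    (hsa : ∀ p q : E × ℝ, iprod (H p) q = iprod p (H q))
    (hpd : ∀ p : E × ℝ, p ≠ 0 → 0 < iprod (H p) p)
    (hS : S = {p : E × ℝ | iprod (H (p - c)) (p - c) ≤ 1})
    (hpos : ∀ p ∈ S, 0 < p.2) :
    ∃ (c' : E × ℝ) (H' : (E × ℝ) →ₗ[ℝ] (E × ℝ)),
      0 < c'.2 ∧
      (∀ p q : E × ℝ, iprod (H' p) q = iprod p (H' q)) ∧
      (∀ p : E × ℝ, p ≠ 0 → 0 < iprod (H' p) p) ∧
      radialSet S = {p : E × ℝ | iprod (H' (p - c')) (p - c') ≤ 1} ∧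
      (∀ p ∈ radialSet S, 0 < p.2) := by
  classical
  set L := auxL c with hLdef
  set A := auxA c H with hAdef
  set e : E × ℝ := (0, 1) with hedef
  -- basic facts
  have hc2 : 0 < c.2 := by
    apply hpos c
    rw [hS]
    simp only [Set.mem_setOf_eq, sub_self, map_zero, iprod_zero_left]
    norm_num
  have hAform : ∀ p q : E × ℝ, iprod (A p) q = iprod (H (L p)) (L q) - p.2 * q.2 :=
    fun p q => iprod_auxA c H p q
  have hAsymm : ∀ p q : E × ℝ, iprod (A p) q = iprod p (A q) := by
    intro p q
    rw [hAform, iprod_comm p (A q), hAform, hsa (L p) (L q), iprod_comm (L p) (H (L q))]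
    ring
  -- key geometric identity: radialPoint p - c = p.2⁻¹ • (L p + e)
  have hkeyeq : ∀ p : E × ℝ, p.2 ≠ 0 → radialPoint p - c = p.2⁻¹ • (L p + e) := by
    intro p hp
    have : L p + e = (p.1, 1) - p.2 • c := by
      rw [auxL_apply]; ext <;> simp [hedef] <;> ring
    rw [this]
    ext
    · simp [radialPoint, smul_sub, smul_smul, inv_mul_cancel₀ hp]
    · simp [radialPoint, smul_sub, smul_smul]
      field_simp
  have hquad : ∀ p : E × ℝ, p.2 ≠ 0 →
      iprod (H (radialPoint p - c)) (radialPoint p - c)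
        = (p.2⁻¹)^2 * iprod (H (L p + e)) (L p + e) := by
    intro p hp
    rw [hkeyeq p hp, map_smul, iprod_smul_left, iprod_smul_right]
    ring
  -- positive definiteness of A
  have hApd : ∀ p : E × ℝ, p ≠ 0 → 0 < iprod (A p) p := by
    intro p hp
    by_contra hle
    push_neg at hle
    rw [hAform] at hle
    by_cases h2 : p.2 = 0
    · have h1 : p.1 ≠ 0 := by
        intro h1; exact hp (Prod.ext h1 h2)
      have hL : L p = (p.1, 0) := by rw [auxL_apply, h2]; simp
      have hLne : L p ≠ 0 := by
        rw [hL]; intro h; exact h1 (congrArg Prod.fst h)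
      have := hpd (L p) hLne
      rw [h2] at hle
      simp at hle
      linarith
    · -- the point c + p.2⁻¹ • L p lies in S with second coordinate 0
      set z : E × ℝ := c + p.2⁻¹ • L p with hz
      have hz2 : z.2 = 0 := by
        simp only [hz, Prod.snd_add, Prod.smul_snd, smul_eq_mul, auxL_apply, hLdef,
          Prod.snd_sub, Prod.smul_snd]
        field_simp
        ring
      have hzS : z ∈ S := by
        rw [hS]
        simp only [Set.mem_setOf_eq]
        have : z - c = p.2⁻¹ • L p := by rw [hz]; abel
        rw [this, map_smul, iprod_smul_left, iprod_smul_right]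
        have hle' : iprod (H (L p)) (L p) ≤ p.2^2 := by rw [sq]; linarith
        have h1 : (0:ℝ) ≤ (p.2⁻¹)^2 := sq_nonneg _
        calc p.2⁻¹ * (p.2⁻¹ * iprod (H (L p)) (L p))
            = (p.2⁻¹)^2 * iprod (H (L p)) (L p) := by ring
          _ ≤ (p.2⁻¹)^2 * p.2^2 := mul_le_mul_of_nonneg_left hle' h1
          _ = 1 := by field_simp
      have := hpos z hzS
      rw [hz2] at this
      exact lt_irrefl 0 this
  have hAnonneg : ∀ p : E × ℝ, 0 ≤ iprod (A p) p := by
    intro p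
    by_cases hp : p = 0
    · rw [hp, map_zero, iprod_zero_left]
    · exact (hApd p hp).le
  -- invertibility of A, get center c'
  have hAinj : Function.Injective A := by
    rw [injective_iff_map_eq_zero]
    intro p hp
    by_contra hne
    have := hApd p hne
    rw [hp, iprod_zero_left] at this
    exact lt_irrefl 0 this
  have hAsurj : Function.Surjective A := (LinearMap.injective_iff_surjective).mp hAinj
  obtain ⟨c', hc'⟩ := hAsurj (- auxLstar c (H e))
  set k : ℝ := iprod (A c') c' - iprod (H e) e with hkdef
  -- completing the square
  have hb : ∀ p : E × ℝ, iprod (A c') p = - iprod (H (L p)) e := by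
    intro p
    rw [hc', iprod_neg_left, iprod_auxLstar, hsa, iprod_comm e (H (auxL c p)), ← hLdef]
  have expand : ∀ p : E × ℝ,
      iprod (H (L p + e)) (L p + e) - p.2^2 = iprod (A (p - c')) (p - c') - k := by
    intro p
    have e1 : iprod (H (L p + e)) (L p + e)
        = iprod (H (L p)) (L p) + 2 * iprod (H (L p)) e + iprod (H e) e := by
      rw [map_add, iprod_add_left, iprod_add_right, iprod_add_right]
      have : iprod (H e) (L p) = iprod (H (L p)) e := by
        rw [hsa, iprod_comm]
      rw [this]; ring
    have e2 : iprod (A (p - c')) (p - c')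
        = iprod (A p) p - 2 * iprod (A c') p + iprod (A c') c' := by
      rw [map_sub, iprod_sub_left, iprod_sub_right, iprod_sub_right]
      have : iprod (A p) c' = iprod (A c') p := by rw [hAsymm, iprod_comm]
      rw [this]; ring
    rw [e1, e2, hb, hAform, hkdef]
    ring
  -- main characterization
  have hmem : ∀ p : E × ℝ, 0 < p.2 →
      (radialPoint p ∈ S ↔ iprod (A (p - c')) (p - c') ≤ k) := by
    intro p hp
    rw [hS]
    simp only [Set.mem_setOf_eq]
    rw [hquad p (ne_of_gt hp)]
    have h2 : (0:ℝ) < p.2^2 := by positivity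
    have hiv : (p.2⁻¹)^2 = (p.2^2)⁻¹ := by rw [inv_pow]
    rw [hiv]
    rw [inv_mul_le_iff₀ h2, mul_one]
    constructor
    · intro h
      have := expand p
      linarith
    · intro h
      have := expand p
      linarith
  -- positivity of k
  have hk : 0 < k := by
    set p₀ : E × ℝ := radialPoint c with hp0
    have hp02 : p₀.2 = c.2⁻¹ := rfl
    have hp02pos : 0 < p₀.2 := by rw [hp02]; positivity
    have hrp : radialPoint p₀ = c := radialPoint_invol_s2 c (ne_of_gt hc2)
    have hq0 : iprod (H (L p₀ + e)) (L p₀ + e) = 0 := by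
      have h := hquad p₀ (ne_of_gt hp02pos)
      rw [hrp, sub_self, map_zero, iprod_zero_left] at h
      rcases mul_eq_zero.mp h.symm with h' | h'
      · exact absurd h' (by rw [hp02, inv_inv]; positivity)
      · exact h' 
    have h := expand p₀
    rw [hq0] at h
    have hnn := hAnonneg (p₀ - c')
    have : 0 < p₀.2^2 := by positivity
    linarith
  -- negative second coordinate is impossible
  have hv : ∀ p : E × ℝ, iprod (A (p - c')) (p - c') ≤ k → 0 < p.2 := by
    intro p h
    have hR : iprod (H (L p + e)) (L p + e) ≤ p.2^2 := by
      have := expand p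
      linarith
    rcases lt_trichotomy p.2 0 with hneg | hzero | hposs
    · exfalso
      have hne : p.2 ≠ 0 := ne_of_lt hneg
      have hmemS : radialPoint p ∈ S := by
        rw [hS]
        simp only [Set.mem_setOf_eq]
        rw [hquad p hne]
        have h2 : (0:ℝ) < p.2^2 := by positivity
        rw [inv_pow, inv_mul_le_iff₀ h2, mul_one]
        exact hR
      have := hpos _ hmemS
      have : (0:ℝ) < p.2⁻¹ := this
      have : p.2⁻¹ < 0 := inv_lt_zero.mpr hneg
      linarith
    · exfalso
      have hLpe : L p + e = (p.1, 1) := by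
        rw [auxL_apply, hzero]
        ext <;> simp [hedef]
      have hne : L p + e ≠ 0 := by
        rw [hLpe]
        intro hcon
        have : (1:ℝ) = 0 := congrArg Prod.snd hcon
        norm_num at this
      have := hpd _ hne
      have h0 : p.2^2 = (0:ℝ) := by rw [hzero]; ring
      rw [h0] at hR
      linarith
    · exact hposs
  -- assemble
  refine ⟨c', k⁻¹ • A, ?_, ?_, ?_, ?_, ?_⟩
  · apply hv
    rw [sub_self, map_zero, iprod_zero_left]
    exact hk.le
  · intro p q
    simp only [LinearMap.smul_apply]
    rw [iprod_smul_left, iprod_smul_right, hAsymm]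
  · intro p hp
    simp only [LinearMap.smul_apply]
    rw [iprod_smul_left]
    exact mul_pos (by positivity) (hApd p hp)
  · ext p
    simp only [Set.mem_setOf_eq, LinearMap.smul_apply]
    rw [iprod_smul_left]
    have hiff : k⁻¹ * iprod (A (p - c')) (p - c') ≤ 1 ↔ iprod (A (p - c')) (p - c') ≤ k := by
      rw [inv_mul_le_iff₀ hk, mul_one]
    rw [hiff]
    constructor
    · rintro ⟨q, hqS, rfl⟩
      have hq2 : 0 < q.2 := hpos q hqS
      have hrp2 : 0 < (radialPoint q).2 := by
        simp only [radialPoint]; positivity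
      rw [← hmem _ hrp2, radialPoint_invol_s2 q (ne_of_gt hq2)]
      exact hqS
    · intro h
      have hp2 : 0 < p.2 := hv p h
      refine ⟨radialPoint p, (hmem p hp2).mpr h, radialPoint_invol_s2 p (ne_of_gt hp2)⟩
  · rintro p ⟨q, hqS, rfl⟩
    have hq2 : 0 < q.2 := hpos q hqS
    simp only [radialPoint]
    positivity
end
end

section
/- For any S ⊆ E × ℝ₊₊ and any (y,v) ∈ ΓS, letting (x,u) = Γ(y,v), the convex normal cone of ΓS at (y,v) is N^C_{ΓS}((y,v)) = {(ζ, −(⟨ζ,x⟩ + δu)) : (ζ,δ) ∈ N^C_S((x,u))}. -/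
open Set
open scoped ENNReal RealInnerProductSpace

noncomputable section

variable {E : Type*} [NormedAddCommGroup E] [InnerProductSpace ℝ E] [FiniteDimensional ℝ E]

/-- The convex normal cone of `S` at `p`: `{w : ⟨w, p − q⟩ ≥ 0 for all q ∈ S}`. -/
def normalConeC (S : Set (E × ℝ)) (p : E × ℝ) : Set (E × ℝ) :=
  {w : E × ℝ | ∀ q ∈ S, 0 ≤ iprod w (p - q)}

lemma radial_key (A B δ v b : ℝ) (hv : v ≠ 0) (hb : b ≠ 0) :
    (v⁻¹ * A - B) + δ * (v⁻¹ - b) =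
      b * ((A - b⁻¹ * B) + (-(v⁻¹ * A + δ * v⁻¹)) * (v - b⁻¹)) := by
  field_simp
  ring

/-- Convex normal vectors under the radial set transformation: for `(y,v) ∈ ΓS` and
`(x,u) = Γ(y,v)`, `N^C_{ΓS}((y,v)) = {(ζ, −(⟨ζ,x⟩ + δu)) : (ζ,δ) ∈ N^C_S((x,u))}`. -/
theorem radialSet_convex_normals (S : Set (E × ℝ)) (hpos : ∀ p ∈ S, 0 < p.2)
    (y : E) (v : ℝ) (hyv : (y, v) ∈ radialSet S) :
    normalConeC (radialSet S) (y, v) =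
      {w : E × ℝ | ∃ ζ : E, ∃ δ : ℝ,
        (ζ, δ) ∈ normalConeC S (v⁻¹ • y, v⁻¹) ∧
        w = (ζ, -(⟪ζ, v⁻¹ • y⟫ + δ * v⁻¹))} := by
  obtain ⟨⟨a0, b0⟩, haS, hrad⟩ := hyv
  have hb0 : 0 < b0 := hpos _ haS
  have hv0 : 0 < v := by
    have : v = b0⁻¹ := by
      have := congrArg Prod.snd hrad
      simpa [radialPoint] using this.symm
    simpa [this] using inv_pos.mpr hb0
  have hvne : v ≠ 0 := hv0.ne'
  ext w
  obtain ⟨ζ, δ'⟩ := w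
  simp only [mem_setOf_eq, normalConeC, iprod]
  constructor
  · intro hw
    refine ⟨ζ, -v * (δ' + ⟪ζ, v⁻¹ • y⟫), ?_, ?_⟩
    · intro q hq
      have hqb : 0 < q.2 := hpos q hq
      have h := hw (radialPoint q) ⟨q, hq, rfl⟩
      simp only [radialPoint, Prod.fst_sub, Prod.snd_sub, inner_sub_right,
        real_inner_smul_right] at h ⊢
      have key := radial_key ⟪ζ, y⟫ ⟪ζ, q.1⟫ (-v * (δ' + v⁻¹ * ⟪ζ, y⟫)) v q.2
        hvne hqb.ne'
      have hδ' : -(v⁻¹ * ⟪ζ, y⟫ + (-v * (δ' + v⁻¹ * ⟪ζ, y⟫)) * v⁻¹) = δ' := by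
        field_simp
        ring
      rw [hδ'] at key
      rw [key]
      exact mul_nonneg hqb.le h
    · simp only [Prod.mk.injEq, real_inner_smul_right, true_and]
      field_simp
      ring
  · rintro ⟨ζ', δ, hδ, heq⟩
    obtain ⟨h1, h2⟩ := Prod.mk.injEq .. ▸ heq
    subst h1
    rintro q' ⟨q, hq, rfl⟩
    have hqb : 0 < q.2 := hpos q hq
    have h := hδ q hq
    simp only [radialPoint, Prod.fst_sub, Prod.snd_sub, inner_sub_right,
      real_inner_smul_right] at h h2 ⊢
    subst h2
    have key := radial_key ⟪ζ, y⟫ ⟪ζ, q.1⟫ δ v q.2 hvne hqb.ne'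
    have hpos' : (0:ℝ) < q.2⁻¹ := inv_pos.mpr hqb
    nlinarith [mul_nonneg hpos'.le h, mul_pos hqb hpos']
end
end

section
/- A function f : E → [0,∞] is upper radial if and only if (f^Γ)^Γ = f, i.e. applying the upper radial transformation twice recovers f. Likewise, f is lower radial if and only if (f_Γ)_Γ = f. -/
open Set
open scoped ENNReal RealInnerProductSpace

noncomputable section

variable {E : Type*} [NormedAddCommGroup E] [InnerProductSpace ℝ E] [FiniteDimensional ℝ E]

/-- The perspective function `f^p(y,v) = v·f(y/v)` (for `v > 0`). -/
def persp (f : E → ℝ≥0∞) (y : E) (v : ℝ) : ℝ≥0∞ := ENNReal.ofReal v * f (v⁻¹ • y)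

/-- The upper radial transformation `f^Γ(y) = sup{v > 0 : v·f(y/v) ≤ 1}` (`sup ∅ = 0`). -/
def radSup (f : E → ℝ≥0∞) (y : E) : ℝ≥0∞ :=
  ⨆ (v : ℝ) (_ : 0 < v) (_ : persp f y v ≤ 1), ENNReal.ofReal v

/-- The lower radial transformation `f_Γ(y) = inf{v > 0 : v·f(y/v) ≥ 1}` (`inf ∅ = ∞`). -/
def radInf (f : E → ℝ≥0∞) (y : E) : ℝ≥0∞ :=
  ⨅ (v : ℝ) (_ : 0 < v) (_ : 1 ≤ persp f y v), ENNReal.ofReal v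

/-- `f` is upper radial: every `f^p(y,·)` is nondecreasing and upper semicontinuous on `ℝ₊₊`. -/
def UpperRadial (f : E → ℝ≥0∞) : Prop :=
  ∀ y : E, MonotoneOn (persp f y) (Ioi (0 : ℝ)) ∧
    UpperSemicontinuousOn (persp f y) (Ioi (0 : ℝ))

/-- `f` is lower radial: every `f^p(y,·)` is nondecreasing and lower semicontinuous on `ℝ₊₊`. -/
def LowerRadial (f : E → ℝ≥0∞) : Prop :=
  ∀ y : E, MonotoneOn (persp f y) (Ioi (0 : ℝ)) ∧
    LowerSemicontinuousOn (persp f y) (Ioi (0 : ℝ))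

/-!
For fixed `y`, the perspective `v ↦ f^p(y, v)` turns both radial transformations into generalized
inverses of functions `g : ℝ₊₊ → [0, ∞]`, namely `v ↦ sup {w > 0 : g w ≤ v}` and
`v ↦ inf {w > 0 : v ≤ g w}`: the perspective of `f^Γ` along `y` is the generalized inverse of the
perspective of `f` along `y`. The generalized inverse of a nondecreasing function is nondecreasing
and upper (resp. lower) semicontinuous, and inverting twice returns `g` exactly when `g` is
nondecreasing and upper (resp. lower) semicontinuous on `ℝ₊₊`.
-/

open Filter Topology

theorem UpperSemicontinuousOn.congr {α β : Type*} [TopologicalSpace α] [Preorder β]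
    {f g : α → β} {s : Set α} (h : UpperSemicontinuousOn f s) (hfg : EqOn f g s) :
    UpperSemicontinuousOn g s := fun x hx =>
  UpperSemicontinuousWithinAt.congr_of_eventuallyEq (h x hx) hx hfg.eventuallyEq_nhdsWithin

theorem LowerSemicontinuousOn.congr {α β : Type*} [TopologicalSpace α] [Preorder β]
    {f g : α → β} {s : Set α} (h : LowerSemicontinuousOn f s) (hfg : EqOn f g s) :
    LowerSemicontinuousOn g s := fun x hx =>
  LowerSemicontinuousWithinAt.congr_of_eventuallyEq (h x hx) hx hfg.eventuallyEq_nhdsWithin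

def supInv (g : ℝ → ℝ≥0∞) (v : ℝ) : ℝ≥0∞ :=
  ⨆ (w : ℝ) (_ : 0 < w) (_ : g w ≤ ENNReal.ofReal v), ENNReal.ofReal w

def infInv (g : ℝ → ℝ≥0∞) (v : ℝ) : ℝ≥0∞ :=
  ⨅ (w : ℝ) (_ : 0 < w) (_ : ENNReal.ofReal v ≤ g w), ENNReal.ofReal w

section GeneralizedInverse

variable {g g' : ℝ → ℝ≥0∞} {v w : ℝ} {c : ℝ≥0∞}

theorem ofReal_le_supInv (hw : 0 < w) (h : g w ≤ ENNReal.ofReal v) :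
    ENNReal.ofReal w ≤ supInv g v :=
  le_iSup_of_le w <| le_iSup_of_le hw <| le_iSup_of_le h le_rfl

theorem supInv_le (h : ∀ w, 0 < w → g w ≤ ENNReal.ofReal v → ENNReal.ofReal w ≤ c) :
    supInv g v ≤ c :=
  iSup₂_le fun w hw => iSup_le (h w hw)

theorem infInv_le_ofReal (hw : 0 < w) (h : ENNReal.ofReal v ≤ g w) :
    infInv g v ≤ ENNReal.ofReal w :=
  iInf_le_of_le w <| iInf_le_of_le hw <| iInf_le_of_le h le_rfl

theorem le_infInv (h : ∀ w, 0 < w → ENNReal.ofReal v ≤ g w → c ≤ ENNReal.ofReal w) :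
    c ≤ infInv g v :=
  le_iInf₂ fun w hw => le_iInf (h w hw)

theorem supInv_congr (h : EqOn g g' (Ioi 0)) : supInv g = supInv g' := by
  funext v
  refine iSup_congr fun w => iSup_congr fun hw => ?_
  rw [h hw]

theorem infInv_congr (h : EqOn g g' (Ioi 0)) : infInv g = infInv g' := by
  funext v
  refine iInf_congr fun w => iInf_congr fun hw => ?_
  rw [h hw]

theorem monotone_supInv : Monotone (supInv g) := fun _ _ hab =>
  supInv_le fun _ hw hgw => ofReal_le_supInv hw (hgw.trans (ENNReal.ofReal_le_ofReal hab))

theorem monotone_infInv : Monotone (infInv g) := fun _ _ hab =>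
  le_infInv fun _ hw hgw => infInv_le_ofReal hw ((ENNReal.ofReal_le_ofReal hab).trans hgw)

theorem upperSemicontinuous_supInv (hg : MonotoneOn g (Ioi 0)) :
    UpperSemicontinuous (supInv g) := by
  intro v c hc
  obtain ⟨r, -, hvr, hrc⟩ := ENNReal.lt_iff_exists_real_btwn.mp hc
  have hr : 0 < r := ENNReal.ofReal_pos.mp (hvr.trans_le' bot_le)
  obtain ⟨u, hvu, hgr⟩ : ∃ u, v < u ∧ ¬ g r ≤ ENNReal.ofReal u := by
    by_contra! h
    -- otherwise `g r ≤ ofReal v` by right-continuity of `ofReal`, and `r` enters `supInv g v`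
    refine (ofReal_le_supInv hr ?_).not_gt hvr
    exact ge_of_tendsto (ENNReal.continuous_ofReal.continuousWithinAt.tendsto (x := v) (s := Ioi v))
      (eventually_nhdsWithin_of_forall h)
  filter_upwards [Iio_mem_nhds hvu] with x hx
  calc supInv g x ≤ supInv g u := monotone_supInv hx.le
    _ ≤ ENNReal.ofReal r := supInv_le fun w hw hgw => ENNReal.ofReal_le_ofReal <|
        le_of_not_gt fun hrw => hgr ((hg hr hw hrw.le).trans hgw)
    _ < c := hrc

theorem lowerSemicontinuous_infInv (hg : MonotoneOn g (Ioi 0)) :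
    LowerSemicontinuous (infInv g) := by
  intro v c hc
  obtain ⟨r, -, hcr, hrv⟩ := ENNReal.lt_iff_exists_real_btwn.mp hc
  have hr : 0 < r := ENNReal.ofReal_pos.mp (hcr.trans_le' bot_le)
  obtain ⟨u, huv, hgr⟩ : ∃ u, u < v ∧ ¬ ENNReal.ofReal u ≤ g r := by
    by_contra! h
    refine (infInv_le_ofReal hr ?_).not_gt hrv
    exact le_of_tendsto (ENNReal.continuous_ofReal.continuousWithinAt.tendsto (x := v) (s := Iio v))
      (eventually_nhdsWithin_of_forall h)
  filter_upwards [Ioi_mem_nhds huv] with x hx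
  calc c < ENNReal.ofReal r := hcr
    _ ≤ infInv g u := le_infInv fun w hw hgw => ENNReal.ofReal_le_ofReal <|
        le_of_not_gt fun hwr => hgr (hgw.trans (hg hw hr hwr.le))
    _ ≤ infInv g x := monotone_infInv hx.le

theorem le_supInv_supInv (hg : MonotoneOn g (Ioi 0)) (hv : 0 < v) :
    g v ≤ supInv (supInv g) v := by
  refine le_of_forall_lt_imp_le_of_dense fun c hc => ?_
  obtain ⟨w, -, hcw, hwg⟩ := ENNReal.lt_iff_exists_real_btwn.mp hc
  refine hcw.le.trans (ofReal_le_supInv (ENNReal.ofReal_pos.mp (hcw.trans_le' bot_le)) ?_)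
  refine supInv_le fun u hu hgu => ENNReal.ofReal_le_ofReal (le_of_not_gt fun hvu => ?_)
  exact ((hg hv hu hvu.le).trans hgu).not_gt hwg

theorem infInv_infInv_le (hg : MonotoneOn g (Ioi 0)) (hv : 0 < v) :
    infInv (infInv g) v ≤ g v := by
  refine le_of_forall_gt_imp_ge_of_dense fun c hc => ?_
  obtain ⟨w, -, hgw, hwc⟩ := ENNReal.lt_iff_exists_real_btwn.mp hc
  refine (infInv_le_ofReal (ENNReal.ofReal_pos.mp (hgw.trans_le' bot_le)) ?_).trans hwc.le
  refine le_infInv fun u hu hgu => ENNReal.ofReal_le_ofReal (le_of_not_gt fun huv => ?_)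
  exact (hgu.trans (hg hu hv huv.le)).not_gt hgw

theorem supInv_supInv_le (hg : UpperSemicontinuousOn g (Ioi 0)) (hv : 0 < v) :
    supInv (supInv g) v ≤ g v := by
  refine supInv_le fun w hw hgw => le_of_not_gt fun hlt => ?_
  obtain ⟨u, hgu, hvu⟩ :=
    (((hg v hv).mono (Ioi_subset_Ioi hv.le) _ hlt).and self_mem_nhdsWithin).exists
  have := (ofReal_le_supInv (hv.trans hvu) hgu.le).trans hgw
  exact hvu.not_ge ((ENNReal.ofReal_le_ofReal_iff hv.le).mp this)

theorem le_infInv_infInv (hg : LowerSemicontinuousOn g (Ioi 0)) (hv : 0 < v) :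
    g v ≤ infInv (infInv g) v := by
  refine le_infInv fun w hw hgw => le_of_not_gt fun hlt => ?_
  have hev := (hg v hv).mono (Ioo_subset_Ioi_self : Ioo 0 v ⊆ Ioi 0) _ hlt
  rw [nhdsWithin_Ioo_eq_nhdsLT hv] at hev
  obtain ⟨u, hgu, hu⟩ := (hev.and (Ioo_mem_nhdsLT hv)).exists
  have := hgw.trans (infInv_le_ofReal hu.1 hgu.le)
  exact hu.2.not_ge ((ENNReal.ofReal_le_ofReal_iff hu.1.le).mp this)

theorem supInv_supInv_eqOn_iff :
    EqOn (supInv (supInv g)) g (Ioi 0) ↔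
      MonotoneOn g (Ioi 0) ∧ UpperSemicontinuousOn g (Ioi 0) := by
  refine ⟨fun h => ⟨(monotone_supInv.monotoneOn _).congr h, ?_⟩,
    fun ⟨hmono, husc⟩ v hv => (supInv_supInv_le husc hv).antisymm (le_supInv_supInv hmono hv)⟩
  exact ((upperSemicontinuous_supInv (monotone_supInv.monotoneOn _)).upperSemicontinuousOn _).congr
    h

theorem infInv_infInv_eqOn_iff :
    EqOn (infInv (infInv g)) g (Ioi 0) ↔
      MonotoneOn g (Ioi 0) ∧ LowerSemicontinuousOn g (Ioi 0) := by
  refine ⟨fun h => ⟨(monotone_infInv.monotoneOn _).congr h, ?_⟩,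
    fun ⟨hmono, hlsc⟩ v hv => (infInv_infInv_le hmono hv).antisymm (le_infInv_infInv hlsc hv)⟩
  exact ((lowerSemicontinuous_infInv (monotone_infInv.monotoneOn _)).lowerSemicontinuousOn _).congr
    h

end GeneralizedInverse

section Perspective

variable {F : Type*} [NormedAddCommGroup F] [InnerProductSpace ℝ F] {v : ℝ}

theorem persp_one (f : F → ℝ≥0∞) (y : F) : persp f y 1 = f y := by
  simp [persp]

theorem persp_mul (hv : 0 < v) (f : F → ℝ≥0∞) (y : F) (u : ℝ) :
    persp f y (v * u) = ENNReal.ofReal v * persp f (v⁻¹ • y) u := by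
  simp only [persp, ENNReal.ofReal_mul hv.le, mul_assoc, smul_smul, mul_inv_rev]

theorem persp_radSup (hv : 0 < v) (f : F → ℝ≥0∞) (y : F) :
    persp (radSup f) y v = supInv (persp f y) v := by
  have hv₀ : ENNReal.ofReal v ≠ 0 := (ENNReal.ofReal_pos.2 hv).ne'
  calc persp (radSup f) y v
      = ⨆ (u : ℝ) (_ : 0 < u) (_ : persp f (v⁻¹ • y) u ≤ 1), ENNReal.ofReal (v * u) := by
        simp only [persp, radSup, ENNReal.mul_iSup, ENNReal.ofReal_mul hv.le]
    _ = ⨆ (u : ℝ) (_ : 0 < v * u) (_ : persp f y (v * u) ≤ ENNReal.ofReal v),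
          ENNReal.ofReal (v * u) := by
        simp only [mul_pos_iff_of_pos_left hv, persp_mul hv,
          ← ENNReal.mul_le_mul_iff_right hv₀ ENNReal.ofReal_ne_top (c := 1), mul_one]
    _ = supInv (persp f y) v := (Equiv.mulLeft₀ v hv.ne').iSup_comp
          (g := fun w => ⨆ (_ : 0 < w) (_ : persp f y w ≤ ENNReal.ofReal v), ENNReal.ofReal w)

theorem persp_radInf (hv : 0 < v) (f : F → ℝ≥0∞) (y : F) :
    persp (radInf f) y v = infInv (persp f y) v := by
  have hv₀ : ENNReal.ofReal v ≠ 0 := (ENNReal.ofReal_pos.2 hv).ne'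
  calc persp (radInf f) y v
      = ⨅ (u : ℝ) (_ : 0 < u) (_ : 1 ≤ persp f (v⁻¹ • y) u), ENNReal.ofReal (v * u) := by
        simp only [persp, radInf, ENNReal.mul_iInf_of_ne hv₀ ENNReal.ofReal_ne_top,
          ENNReal.ofReal_mul hv.le]
    _ = ⨅ (u : ℝ) (_ : 0 < v * u) (_ : ENNReal.ofReal v ≤ persp f y (v * u)),
          ENNReal.ofReal (v * u) := by
        simp only [mul_pos_iff_of_pos_left hv, persp_mul hv,
          ← ENNReal.mul_le_mul_iff_right hv₀ ENNReal.ofReal_ne_top (b := 1), mul_one]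
    _ = infInv (persp f y) v := (Equiv.mulLeft₀ v hv.ne').iInf_comp
          (g := fun w => ⨅ (_ : 0 < w) (_ : ENNReal.ofReal v ≤ persp f y w), ENNReal.ofReal w)

theorem persp_radSup_radSup (hv : 0 < v) (f : F → ℝ≥0∞) (y : F) :
    persp (radSup (radSup f)) y v = supInv (supInv (persp f y)) v := by
  rw [persp_radSup hv, supInv_congr fun w hw => persp_radSup hw f y]

theorem radSup_radSup_eq_iff {f : F → ℝ≥0∞} :
    radSup (radSup f) = f ↔ ∀ y, EqOn (supInv (supInv (persp f y))) (persp f y) (Ioi 0) := by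
  refine ⟨fun h y v hv => by rw [← persp_radSup_radSup hv, h], fun h => funext fun y => ?_⟩
  rw [← persp_one (radSup (radSup f)), persp_radSup_radSup one_pos, h y (mem_Ioi.2 one_pos),
    persp_one]

theorem persp_radInf_radInf (hv : 0 < v) (f : F → ℝ≥0∞) (y : F) :
    persp (radInf (radInf f)) y v = infInv (infInv (persp f y)) v := by
  rw [persp_radInf hv, infInv_congr fun w hw => persp_radInf hw f y]

theorem radInf_radInf_eq_iff {f : F → ℝ≥0∞} :
    radInf (radInf f) = f ↔ ∀ y, EqOn (infInv (infInv (persp f y))) (persp f y) (Ioi 0) := by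
  refine ⟨fun h y v hv => by rw [← persp_radInf_radInf hv, h], fun h => funext fun y => ?_⟩
  rw [← persp_one (radInf (radInf f)), persp_radInf_radInf one_pos, h y (mem_Ioi.2 one_pos),
    persp_one]

end Perspective

/-- `f` is upper radial iff `(f^Γ)^Γ = f`; `f` is lower radial iff `(f_Γ)_Γ = f`. -/
theorem radial_function_duality (f : E → ℝ≥0∞) :
    (UpperRadial f ↔ radSup (radSup f) = f) ∧
    (LowerRadial f ↔ radInf (radInf f) = f) := by
  rw [radSup_radSup_eq_iff, radInf_radInf_eq_iff]
  exact ⟨forall_congr' fun _ => supInv_supInv_eqOn_iff.symm,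
    forall_congr' fun _ => infInv_infInv_eqOn_iff.symm⟩
end
end

section
/- Let f : E → [0,∞] be continuously differentiable, meaning f is continuous on E and its gradient ∇f exists and is continuous on dom f. Then f is radial (i.e. both upper and lower radial) if and only if ⟨∇f(x), x⟩ − f(x) ≤ 0 for all x ∈ dom f. -/
/-!
Along the ray through `y`, the real perspective `k v = v * f (v⁻¹ • y)` has derivative
`f x - ⟪∇f x, x⟫` at `v`, where `x = v⁻¹ • y`, as long as `x ∈ dom f`. So the gradient inequality
makes `k` nondecreasing on every interval where `f` stays in `(0, ∞)` along the ray, and conversely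
monotonicity of the perspective at `v = 1` gives the inequality. Monotonicity also survives zeros
and infinite values of `f`: if a continuous `[0, ∞]`-valued function dropped from `h a` to
`h b < h a`, then for levels `h b < p < q < h a` it would fall from `q` to `p` on a subinterval
where it is finite and positive. Semicontinuity is just continuity of the perspective.
-/

open Set
open scoped ENNReal RealInnerProductSpace

noncomputable section

variable {E : Type*} [NormedAddCommGroup E] [InnerProductSpace ℝ E] [FiniteDimensional ℝ E]

/-- The effective domain `dom f = {x : 0 < f(x) < ∞}`. -/
def effDom (f : E → ℝ≥0∞) : Set E := {x : E | f x ≠ 0 ∧ f x ≠ ⊤}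

open Filter Topology

theorem ENNReal.le_of_le_on_subintervals_of_ne_zero_ne_top {h : ℝ → ℝ≥0∞} {a b : ℝ}
    (hab : a ≤ b) (hcont : ContinuousOn h (Icc a b))
    (hloc : ∀ c d, a ≤ c → c < d → d ≤ b →
      (∀ v ∈ Icc c d, h v ≠ ⊤) → (∀ v ∈ Ioo c d, h v ≠ 0) → h c ≤ h d) :
    h a ≤ h b := by
  by_contra! hba
  obtain ⟨q, hbq, hqa⟩ := exists_between hba
  obtain ⟨p, hbp, hpq⟩ := exists_between hbq
  have isClosed_preimage : ∀ {x} (t : Set ℝ≥0∞), x ≤ b → IsClosed t →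
      IsClosed {v | v ∈ Icc a x ∧ h v ∈ t} := fun t hxb ht =>
    (hcont.mono (Icc_subset_Icc_right hxb)).preimage_isClosed_of_isClosed isClosed_Icc ht
  -- `d` is the first time `h` falls to `p`, and `c` the last time before `d` it is at least `q`.
  set d := sInf {v | v ∈ Icc a b ∧ h v ∈ Iic p}
  have hd : d ∈ Icc a b ∧ h d ≤ p :=
    (isClosed_preimage _ le_rfl isClosed_Iic).csInf_mem ⟨b, ⟨hab, le_rfl⟩, hbp.le⟩
      ⟨a, fun v hv => hv.1.1⟩
  have lt_of_lt_d : ∀ v ∈ Ico a d, p < h v := fun v hv => not_le.1 fun hvp =>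
    hv.2.not_ge (csInf_le ⟨a, fun w hw => hw.1.1⟩ ⟨⟨hv.1, hv.2.le.trans hd.1.2⟩, hvp⟩)
  set c := sSup {v | v ∈ Icc a d ∧ h v ∈ Ici q}
  have hc : c ∈ Icc a d ∧ q ≤ h c :=
    (isClosed_preimage _ hd.1.2 isClosed_Ici).csSup_mem ⟨a, ⟨le_rfl, hd.1.1⟩, hqa.le⟩
      ⟨d, fun v hv => hv.1.2⟩
  have hcd : c < d := hc.1.2.lt_of_ne fun hcd => (hpq.trans_le (hcd ▸ hc.2)).not_ge hd.2
  have le_q : ∀ v ∈ Icc c d, h v ≤ q := by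
    have hsub : Ioc c d ⊆ {v | v ∈ Icc a d ∧ h v ∈ Iic q} := fun v hv =>
      ⟨⟨hc.1.1.trans hv.1.le, hv.2⟩, mem_Iic.2 <| not_lt.1 fun hqv =>
        hv.1.not_ge (le_csSup ⟨d, fun w hw => hw.1.2⟩ ⟨⟨hc.1.1.trans hv.1.le, hv.2⟩, hqv.le⟩)⟩
    rw [← closure_Ioc hcd.ne]
    exact fun v hv => ((isClosed_preimage _ hd.1.2 isClosed_Iic).closure_subset_iff.2 hsub hv).2
  have hle := hloc c d hc.1.1 hcd hd.1.2
    (fun v hv => ne_top_of_le_ne_top (hqa.trans_le le_top).ne (le_q v hv))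
    (fun v hv => (lt_of_lt_d v ⟨hc.1.1.trans hv.1.le, hv.2⟩).ne_bot)
  exact (hpq.trans_le (hc.2.trans hle)).not_ge hd.2

theorem ContinuousAt.comp_inv_smul {V X : Type*} [NormedAddCommGroup V] [NormedSpace ℝ V]
    [TopologicalSpace X] {φ : V → X} {y : V} {v : ℝ} (hφ : ContinuousAt φ (v⁻¹ • y))
    (hv : v ≠ 0) : ContinuousAt (fun w : ℝ => φ (w⁻¹ • y)) v :=
  hφ.comp (f := fun w : ℝ => w⁻¹ • y) (by fun_prop (disch := exact hv))

variable {F : Type*} [NormedAddCommGroup F] [InnerProductSpace ℝ F]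

theorem HasGradientAt.hasDerivAt_mul_comp_inv_smul [CompleteSpace F] {φ : F → ℝ} {G y : F}
    {v : ℝ} (hv : v ≠ 0) (h : HasGradientAt φ G (v⁻¹ • y)) :
    HasDerivAt (fun w : ℝ => w * φ (w⁻¹ • y)) (φ (v⁻¹ • y) - ⟪G, v⁻¹ • y⟫) v := by
  have hray : HasDerivAt (fun w : ℝ => w⁻¹ • y) (-(v ^ 2)⁻¹ • y) v :=
    (hasDerivAt_inv hv).smul_const y
  refine ((hasDerivAt_id' v).mul (h.hasFDerivAt.comp_hasDerivAt v hray)).congr_deriv ?_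
  simp only [Function.comp_apply, InnerProductSpace.toDual_apply_apply, real_inner_smul_right]
  field_simp
  ring

variable {f : F → ℝ≥0∞} {y : F} {v : ℝ}

theorem persp_eq_ofReal (hv : 0 ≤ v) (hfin : f (v⁻¹ • y) ≠ ⊤) :
    persp f y v = ENNReal.ofReal (v * (f (v⁻¹ • y)).toReal) := by
  rw [persp, ENNReal.ofReal_mul hv, ENNReal.ofReal_toReal hfin]

theorem persp_ne_top_iff (hv : 0 < v) : persp f y v ≠ ⊤ ↔ f (v⁻¹ • y) ≠ ⊤ := by
  simp [persp, ENNReal.mul_eq_top, hv]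

theorem persp_ne_zero_iff (hv : 0 < v) : persp f y v ≠ 0 ↔ f (v⁻¹ • y) ≠ 0 := by
  simp [persp, hv]

theorem continuousOn_persp (hf : Continuous f) (y : F) : ContinuousOn (persp f y) (Ioi 0) := by
  refine ENNReal.continuous_ofReal.continuousOn.ennreal_mul ?_
    (fun v hv => Or.inl (ENNReal.ofReal_pos.2 hv).ne') (fun _ _ => Or.inr ENNReal.ofReal_ne_top)
  exact fun v hv => (hf.continuousAt.comp_inv_smul (ne_of_gt hv)).continuousWithinAt

theorem inner_le_of_monotoneOn_persp [CompleteSpace F] {x G : F} (hf : ContinuousAt f x)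
    (hx : x ∈ effDom f) (hG : HasGradientAt (fun z => (f z).toReal) G x)
    (hmono : MonotoneOn (persp f x) (Ioi 0)) :
    ⟪G, x⟫ ≤ (f x).toReal := by
  set k := fun w : ℝ => w * (f (w⁻¹ • x)).toReal
  have hk : HasDerivAt k ((f x).toReal - ⟪G, x⟫) 1 := by
    simpa using HasGradientAt.hasDerivAt_mul_comp_inv_smul (y := x) one_ne_zero (by simpa using hG)
  set S := {w : ℝ | 0 < w ∧ f (w⁻¹ • x) ≠ ⊤}
  have hS : S ∈ 𝓝 1 := by
    have hray := ContinuousAt.comp_inv_smul (y := x) (by simpa using hf) one_ne_zero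
    exact inter_mem (Ioi_mem_nhds one_pos) (hray.preimage_mem_nhds
      (ENNReal.isOpen_ne_top.mem_nhds (by simpa using hx.2)))
  have hk_mono : MonotoneOn k S := fun a ha b hb hab => by
    have hle := hmono ha.1 hb.1 hab
    rwa [persp_eq_ofReal ha.1.le ha.2, persp_eq_ofReal hb.1.le hb.2,
      ENNReal.ofReal_le_ofReal_iff (mul_nonneg hb.1.le ENNReal.toReal_nonneg)] at hle
  have hacc : AccPt 1 (𝓟 S) := accPt_iff_frequently.2 <|
    ((frequently_lt_nhds (1 : ℝ)).mono fun _ h => h.ne).and_eventually hS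
  linarith [hk.hasDerivWithinAt.nonneg_of_monotoneOn hacc hk_mono]

section Monotone

variable [CompleteSpace F] {g : F → F} (hf : Continuous f)
  (hgrad : ∀ x ∈ effDom f, HasGradientAt (fun z => (f z).toReal) (g x) x)
  (hineq : ∀ x ∈ effDom f, ⟪g x, x⟫ ≤ (f x).toReal)
include hf hgrad hineq

theorem persp_le_persp_of_ne_zero_ne_top {c d : ℝ} (hc : 0 < c) (hcd : c ≤ d)
    (htop : ∀ v ∈ Icc c d, f (v⁻¹ • y) ≠ ⊤) (hzero : ∀ v ∈ Ioo c d, f (v⁻¹ • y) ≠ 0) :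
    persp f y c ≤ persp f y d := by
  rw [persp_eq_ofReal hc.le (htop c ⟨le_rfl, hcd⟩),
    persp_eq_ofReal (hc.le.trans hcd) (htop d ⟨hcd, le_rfl⟩)]
  refine ENNReal.ofReal_le_ofReal <| monotoneOn_of_deriv_nonneg
    (f := fun w : ℝ => w * (f (w⁻¹ • y)).toReal) (convex_Icc c d) ?_ ?_ ?_
    ⟨le_rfl, hcd⟩ ⟨hcd, le_rfl⟩ hcd
  · intro v hv
    have hray := hf.continuousAt.comp_inv_smul (y := y) (hc.trans_le hv.1).ne'
    have hray_toReal := (ENNReal.continuousAt_toReal (htop v hv)).comp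
      (f := fun w : ℝ => f (w⁻¹ • y)) hray
    exact (continuousAt_id.mul hray_toReal).continuousWithinAt
  all_goals
    rw [interior_Icc]
    intro v hv
    have hmem : v⁻¹ • y ∈ effDom f := ⟨hzero v hv, htop v (Ioo_subset_Icc_self hv)⟩
    have hderiv := (hgrad _ hmem).hasDerivAt_mul_comp_inv_smul (hc.trans hv.1).ne'
  · exact hderiv.differentiableAt.differentiableWithinAt
  · exact hderiv.deriv ▸ sub_nonneg.2 (hineq _ hmem)

theorem monotoneOn_persp_of_inner_le (y : F) : MonotoneOn (persp f y) (Ioi 0) := by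
  intro a ha b hb hab
  refine ENNReal.le_of_le_on_subintervals_of_ne_zero_ne_top hab
    ((continuousOn_persp hf y).mono fun v hv => ha.trans_le hv.1) ?_
  intro c d hac hcd _ htop hzero
  have hc : (0 : ℝ) < c := ha.trans_le hac
  exact persp_le_persp_of_ne_zero_ne_top hf hgrad hineq hc hcd.le
    (fun v hv => (persp_ne_top_iff (hc.trans_le hv.1)).1 (htop v hv))
    (fun v hv => (persp_ne_zero_iff (hc.trans hv.1)).1 (hzero v hv))

end Monotone

theorem differentiable_radial_characterization_general (f : E → ℝ≥0∞) (g : E → E)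
    (hcont : Continuous f)
    (hgrad : ∀ x ∈ effDom f, HasGradientAt (fun z => (f z).toReal) (g x) x) :
    (UpperRadial f ∧ LowerRadial f) ↔
      ∀ x ∈ effDom f, ⟪g x, x⟫ - (f x).toReal ≤ 0 := by
  simp only [sub_nonpos]
  constructor
  · rintro ⟨hupper, -⟩ x hx
    exact inner_le_of_monotoneOn_persp hcont.continuousAt hx (hgrad x hx) (hupper x).1
  · intro hineq
    have hmono := monotoneOn_persp_of_inner_le hcont hgrad hineq
    exact ⟨fun y => ⟨hmono y, (continuousOn_persp hcont y).upperSemicontinuousOn⟩,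
      fun y => ⟨hmono y, (continuousOn_persp hcont y).lowerSemicontinuousOn⟩⟩

/-- A continuously differentiable `f` (continuous on `E`, with gradient `g` existing and
continuous on `dom f`) is radial (both upper and lower radial) iff
`⟨∇f(x), x⟩ − f(x) ≤ 0` for all `x ∈ dom f`. -/
theorem differentiable_radial_characterization (f : E → ℝ≥0∞) (g : E → E)
    (hcont : Continuous f)
    (hgrad : ∀ x ∈ effDom f, HasGradientAt (fun z => (f z).toReal) (g x) x)
    (hgcont : ContinuousOn g (effDom f)) :
    (UpperRadial f ∧ LowerRadial f) ↔
      ∀ x ∈ effDom f, ⟪g x, x⟫ - (f x).toReal ≤ 0 :=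
  differentiable_radial_characterization_general f g hcont hgrad
end
end

section
/- Let f : E → [0,∞] be upper semicontinuous and concave. Then for every y ∈ E the map v ↦ f^p(y,v) is nondecreasing on ℝ₊₊ if and only if 0 ∈ closure{x ∈ E : f(x) > 0} or f is identically 0. -/
/-!
Monotonicity of every `v ↦ v f(y/v)` on `(0, ∞)` is the same as `t f(x) ≤ f(t x)` for
`t ∈ (0, 1]`. If `f(x) > 0`, this inequality puts the points `t x → 0` into `{f > 0}`.
Conversely, if `0 ∈ closure {f > 0}` then `(0, 0)` lies in the closure of the hypograph, which
is convex; so with `(x, u)` it contains `(t x, t u)`, and upper semicontinuity puts that point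
back into the hypograph.
-/

open Set
open scoped ENNReal RealInnerProductSpace

noncomputable section

variable {E : Type*} [NormedAddCommGroup E] [InnerProductSpace ℝ E] [FiniteDimensional ℝ E]

/-- The hypograph `hypo f = {(x,u) ∈ E × ℝ₊₊ : f(x) ≥ u}`. -/
def hypoSet (f : E → ℝ≥0∞) : Set (E × ℝ) :=
  {p : E × ℝ | 0 < p.2 ∧ ENNReal.ofReal p.2 ≤ f p.1}

open Filter Topology

theorem monotoneOn_persp_iff {F : Type*} [NormedAddCommGroup F] [InnerProductSpace ℝ F]
    {f : F → ℝ≥0∞} :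
    (∀ y, MonotoneOn (persp f y) (Ioi 0)) ↔
      ∀ x, ∀ t ∈ Ioc (0 : ℝ) 1, ENNReal.ofReal t * f x ≤ f (t • x) := by
  constructor
  · intro h x t ⟨ht, ht1⟩
    have := h (t • x) ht (one_pos : (0 : ℝ) < 1) ht1
    simpa [persp, smul_smul, ht.ne'] using this
  · intro h y v (hv : 0 < v) w (hw : 0 < w) hvw
    have hvw' : v / w ∈ Ioc (0 : ℝ) 1 := ⟨div_pos hv hw, (div_le_one hw).2 hvw⟩
    have hscale : (v / w) • v⁻¹ • y = w⁻¹ • y := by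
      rw [smul_smul]
      congr 1
      field_simp
    calc persp f y v = ENNReal.ofReal w * (ENNReal.ofReal (v / w) * f (v⁻¹ • y)) := by
          rw [persp, ← mul_assoc, ← ENNReal.ofReal_mul hw.le, mul_div_cancel₀ _ hw.ne']
      _ ≤ ENNReal.ofReal w * f (w⁻¹ • y) := by
          gcongr
          rw [← hscale]
          exact h _ _ hvw'

theorem zero_mem_closure_hypoSet {F : Type*} [TopologicalSpace F] [Zero F] {f : F → ℝ≥0∞}
    (h0 : (0 : F) ∈ closure {x | 0 < f x}) :
    ((0 : F), (0 : ℝ)) ∈ closure (hypoSet f) := by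
  rw [mem_closure_iff_nhds]
  intro o ho
  obtain ⟨U, hU, V, hV, hUV⟩ := mem_nhds_prod_iff.1 ho
  obtain ⟨z, hzU, hz⟩ := mem_closure_iff_nhds.1 h0 U hU
  have hsmall : ∀ᶠ c in 𝓝 (0 : ℝ), ENNReal.ofReal c < f z :=
    ENNReal.continuous_ofReal.continuousAt.eventually_lt continuousAt_const
      (by simpa using hz)
  obtain ⟨c, ⟨hcV, hcz⟩, hc⟩ :=
    (((Eventually.and hV hsmall).filter_mono nhdsWithin_le_nhds).and
      (self_mem_nhdsWithin (s := Ioi (0 : ℝ)))).exists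
  exact ⟨(z, c), hUV ⟨hzU, hcV⟩, hc, hcz.le⟩

section TopologicalVectorSpace

variable {F : Type*} [AddCommGroup F] [Module ℝ F] [TopologicalSpace F] {f : F → ℝ≥0∞}

theorem zero_mem_closure_pos_of_le_apply_smul [ContinuousSMul ℝ F]
    (h : ∀ x, ∀ t ∈ Ioc (0 : ℝ) 1, ENNReal.ofReal t * f x ≤ f (t • x)) {x : F} (hx : f x ≠ 0) :
    (0 : F) ∈ closure {x | 0 < f x} := by
  have htend : Tendsto (fun t : ℝ => t • x) (𝓝[>] 0) (𝓝 0) :=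
    ((continuous_id.smul continuous_const).tendsto' (0 : ℝ) (0 : F) (zero_smul ℝ x)).mono_left
      nhdsWithin_le_nhds
  refine mem_closure_of_tendsto htend ?_
  filter_upwards [Ioc_mem_nhdsGT one_pos] with t ht
  calc (0 : ℝ≥0∞) < ENNReal.ofReal t * f x :=
        ENNReal.mul_pos (ENNReal.ofReal_pos.2 ht.1).ne' hx
    _ ≤ f (t • x) := h x t ht

theorem le_apply_smul_of_zero_mem_closure [IsTopologicalAddGroup F] [ContinuousSMul ℝ F]
    (husc : ∀ p ∈ closure (hypoSet f), 0 < p.2 → p ∈ hypoSet f)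
    (hconc : Convex ℝ (hypoSet f)) (h0 : (0 : F) ∈ closure {x | 0 < f x})
    (x : F) {t : ℝ} (ht : t ∈ Ioc (0 : ℝ) 1) :
    ENNReal.ofReal t * f x ≤ f (t • x) := by
  have hscale : ∀ p ∈ hypoSet f, t • p ∈ hypoSet f := fun p hp =>
    husc _ (hconc.closure.smul_mem_of_zero_mem (zero_mem_closure_hypoSet h0)
      (subset_closure hp) (Ioc_subset_Icc_self ht)) (mul_pos ht.1 hp.1)
  refine ENNReal.mul_le_of_forall_lt fun a ha b hb => ?_
  rcases eq_or_ne b 0 with rfl | hb0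
  · simp
  have hbtop : b ≠ ∞ := hb.ne_top
  have hxb : (x, b.toReal) ∈ hypoSet f :=
    ⟨ENNReal.toReal_pos hb0 hbtop, (ENNReal.ofReal_toReal hbtop).symm ▸ hb.le⟩
  calc a * b ≤ ENNReal.ofReal t * ENNReal.ofReal b.toReal := by
        rw [ENNReal.ofReal_toReal hbtop]
        gcongr
    _ = ENNReal.ofReal (t * b.toReal) := (ENNReal.ofReal_mul ht.1.le).symm
    _ ≤ f (t • x) := (hscale _ hxb).2

end TopologicalVectorSpace

/-- For an upper semicontinuous concave `f`, every `f^p(y,·)` is nondecreasing on `ℝ₊₊`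
iff `0 ∈ closure{x : f(x) > 0}` or `f` is identically `0`. -/
theorem concave_nondecreasing_characterization (f : E → ℝ≥0∞)
    (husc : ∀ p ∈ closure (hypoSet f), 0 < p.2 → p ∈ hypoSet f)
    (hconc : Convex ℝ (hypoSet f)) :
    (∀ y : E, MonotoneOn (persp f y) (Ioi (0 : ℝ))) ↔
      ((0 : E) ∈ closure {x : E | 0 < f x} ∨ f = fun _ => 0) := by
  rw [monotoneOn_persp_iff]
  constructor
  · intro h
    by_cases hf : f = fun _ => 0
    · exact Or.inr hf
    · obtain ⟨x, hx⟩ := Function.ne_iff.1 hf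
      exact Or.inl (zero_mem_closure_pos_of_le_apply_smul h hx)
  · rintro (h0 | rfl) x t ht
    · exact le_apply_smul_of_zero_mem_closure husc hconc h0 x ht
    · simp
end
end

section
/- If f : E → [0,∞] is concave and 0 ∈ interior{x ∈ E : f(x) > 0}, then for every y ∈ E the map v ↦ f^p(y,v) is strictly increasing on {v > 0 : 0 < f^p(y,v) < ∞}. -/
/-
The perspective grows along the segment from `(v₁⁻¹ • y, u)` to `(0, c)` in the hypograph:
for `t = v₁ / v₂` the convex combination lies over `v₂⁻¹ • y`, so
`v₂ · f(v₂⁻¹ • y) ≥ v₂ (t u + (1 - t) c) = v₁ u + (v₂ - v₁) c`, and `c > 0` makes this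
strictly larger than `v₁ u = f^p(y, v₁)`.
-/

open Set
open scoped ENNReal RealInnerProductSpace

noncomputable section

variable {E : Type*} [NormedAddCommGroup E] [InnerProductSpace ℝ E] [FiniteDimensional ℝ E]

section

-- A fresh type, so that these lemmas do not pick up `[FiniteDimensional ℝ E]`.
variable {F : Type*} [NormedAddCommGroup F] [InnerProductSpace ℝ F]

theorem ofReal_combo_le_of_convex_hypoSet {f : F → ℝ≥0∞} (hconc : Convex ℝ (hypoSet f))
    {x z : F} {u w s t : ℝ} (hu : 0 < u) (hw : 0 < w)
    (hux : ENNReal.ofReal u ≤ f x) (hwz : ENNReal.ofReal w ≤ f z)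
    (hs : 0 ≤ s) (ht : 0 ≤ t) (hst : s + t = 1) :
    ENNReal.ofReal (s * u + t * w) ≤ f (s • x + t • z) :=
  (hconc (x := (x, u)) (y := (z, w)) ⟨hu, hux⟩ ⟨hw, hwz⟩ hs ht hst).2

theorem ofReal_add_le_persp {f : F → ℝ≥0∞} (hconc : Convex ℝ (hypoSet f)) {y : F}
    {u c v₁ v₂ : ℝ} (hu : 0 < u) (hc : 0 < c)
    (hu₁ : ENNReal.ofReal u ≤ f (v₁⁻¹ • y)) (hc₀ : ENNReal.ofReal c ≤ f 0)
    (hv₁ : 0 < v₁) (hv : v₁ < v₂) :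
    ENNReal.ofReal (v₁ * u + (v₂ - v₁) * c) ≤ persp f y v₂ := by
  have hv₂ : 0 < v₂ := hv₁.trans hv
  have hcombo := ofReal_combo_le_of_convex_hypoSet hconc hu hc hu₁ hc₀
    (div_pos hv₁ hv₂).le (sub_nonneg.2 ((div_le_one hv₂).2 hv.le)) (add_sub_cancel _ _)
  have hpoint : (v₁ / v₂) • v₁⁻¹ • y + (1 - v₁ / v₂) • (0 : F) = v₂⁻¹ • y := by
    rw [smul_zero, add_zero, smul_smul]
    congr 1
    field_simp
  rw [hpoint] at hcombo
  calc ENNReal.ofReal (v₁ * u + (v₂ - v₁) * c)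
      = ENNReal.ofReal v₂ * ENNReal.ofReal (v₁ / v₂ * u + (1 - v₁ / v₂) * c) := by
        rw [← ENNReal.ofReal_mul hv₂.le]
        congr 1
        field_simp
    _ ≤ persp f y v₂ := mul_le_mul_right hcombo _

theorem persp_eq_ofReal_mul_toReal {f : F → ℝ≥0∞} {y : F} {v : ℝ} (hv : 0 < v)
    (htop : persp f y v ≠ ⊤) :
    persp f y v = ENNReal.ofReal (v * (f (v⁻¹ • y)).toReal) := by
  have hf : f (v⁻¹ • y) ≠ ⊤ := by
    refine fun h ↦ htop ?_
    rw [persp, h, ENNReal.mul_top (ENNReal.ofReal_pos.2 hv).ne']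
  rw [persp, ENNReal.ofReal_mul hv.le, ENNReal.ofReal_toReal hf]

end

theorem ENNReal.exists_pos_ofReal_le {a : ℝ≥0∞} (ha : 0 < a) :
    ∃ c : ℝ, 0 < c ∧ ENNReal.ofReal c ≤ a := by
  obtain ⟨c, -, hc, hca⟩ := ENNReal.lt_iff_exists_real_btwn.1 ha
  exact ⟨c, ENNReal.ofReal_pos.1 hc, hca.le⟩

/-- If `f` is concave and `0 ∈ interior{x : f(x) > 0}`, then for every `y` the map
`v ↦ f^p(y,v)` is strictly increasing on `{v > 0 : 0 < f^p(y,v) < ∞}`. -/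
theorem concave_strict_increase (f : E → ℝ≥0∞)
    (hconc : Convex ℝ (hypoSet f))
    (h0 : (0 : E) ∈ interior {x : E | 0 < f x}) :
    ∀ y : E, StrictMonoOn (persp f y)
      {v : ℝ | 0 < v ∧ 0 < persp f y v ∧ persp f y v ≠ ⊤} := by
  intro y v₁ ⟨hv₁, hpos, htop⟩ v₂ _ hv
  have hf₀ : 0 < f 0 := interior_subset (s := {x : E | 0 < f x}) h0
  obtain ⟨c, hc, hc₀⟩ := ENNReal.exists_pos_ofReal_le hf₀
  set u := (f (v₁⁻¹ • y)).toReal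
  have hp₁ : persp f y v₁ = ENNReal.ofReal (v₁ * u) := persp_eq_ofReal_mul_toReal hv₁ htop
  have hu : 0 < u := pos_of_mul_pos_right (ENNReal.ofReal_pos.1 (hp₁ ▸ hpos)) hv₁.le
  have hu₁ : ENNReal.ofReal u ≤ f (v₁⁻¹ • y) := ENNReal.ofReal_toReal_le
  have hgain : v₁ * u < v₁ * u + (v₂ - v₁) * c :=
    lt_add_of_pos_right _ (mul_pos (sub_pos.2 hv) hc)
  calc persp f y v₁ = ENNReal.ofReal (v₁ * u) := hp₁
    _ < ENNReal.ofReal (v₁ * u + (v₂ - v₁) * c) :=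
        (ENNReal.ofReal_lt_ofReal_iff ((mul_pos hv₁ hu).trans hgain)).2 hgain
    _ ≤ persp f y v₂ := ofReal_add_le_persp hconc hu hc hu₁ hc₀ hv₁ hv
end
end

section
/- For any functions f, f₁, f₂ : E → [0,∞], any λ > 0, and any linear map A : E' → E (E' a finite-dimensional real inner product space), the following identities hold: (λ·f)^Γ(y) = f^Γ(λy)/λ for all y ∈ E; (f∘A)^Γ = f^Γ∘A; (min{f₁,f₂})^Γ = max{f₁^Γ, f₂^Γ}. Furthermore, if f₁ and f₂ are upper radial, then (max{f₁,f₂})^Γ = min{f₁^Γ, f₂^Γ}. -/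
open Set
open scoped ENNReal RealInnerProductSpace

noncomputable section

variable {E : Type*} [NormedAddCommGroup E] [InnerProductSpace ℝ E] [FiniteDimensional ℝ E]

/-!
The transform `f^Γ(y)` is the supremum of the sublevel set `{v : f^p(y,v) ≤ 1}`; nonpositive `v`
may be admitted, since there `f^p(y,v) = 0` and they contribute `ofReal v = 0`. Scaling `f` by `λ`
rescales this set by `λ⁻¹` at the point `λy`, composing with `A` moves `y` to `Ay`, and the pointwise
min (max) of `f₁, f₂` has as sublevel set the union (intersection) of theirs. A supremum over a union
is the max of the suprema. For the intersection, monotonicity of the perspectives makes both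
sublevel sets lower sets of `ℝ`; these are nested, so the supremum over the intersection is the min.
-/

lemma biSup_inter_eq_min_of_total {α β : Type*} [CompleteLinearOrder β] {s t : Set α}
    (hst : s ⊆ t ∨ t ⊆ s) (g : α → β) :
    ⨆ x ∈ s ∩ t, g x = min (⨆ x ∈ s, g x) (⨆ x ∈ t, g x) := by
  rcases hst with h | h
  · rw [inter_eq_left.mpr h, min_eq_left (biSup_mono h)]
  · rw [inter_eq_right.mpr h, min_eq_right (biSup_mono h)]

section

variable {E E' : Type*} [NormedAddCommGroup E] [InnerProductSpace ℝ E]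
  [NormedAddCommGroup E'] [InnerProductSpace ℝ E']

def perspSublevel (f : E → ℝ≥0∞) (y : E) : Set ℝ := {v | persp f y v ≤ 1}

lemma persp_of_nonpos (f : E → ℝ≥0∞) (y : E) {v : ℝ} (hv : v ≤ 0) : persp f y v = 0 := by
  simp [persp, ENNReal.ofReal_of_nonpos hv]

lemma persp_ofReal_mul (f : E → ℝ≥0∞) (y : E) {c : ℝ} (hc : 0 < c) (v : ℝ) :
    persp (fun x => ENNReal.ofReal c * f x) y v = persp f (c • y) (c * v) := by
  rw [persp, persp, ENNReal.ofReal_mul hc.le, smul_smul, mul_inv_rev, inv_mul_cancel_right₀ hc.ne',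
    mul_assoc, mul_left_comm]

lemma persp_comp_linearMap (f : E → ℝ≥0∞) (A : E' →ₗ[ℝ] E) (y : E') (v : ℝ) :
    persp (fun x => f (A x)) y v = persp f (A y) v := by
  simp only [persp, map_smul]

lemma persp_min (f₁ f₂ : E → ℝ≥0∞) (y : E) (v : ℝ) :
    persp (fun x => min (f₁ x) (f₂ x)) y v = min (persp f₁ y v) (persp f₂ y v) :=
  mul_right_mono.map_min

lemma persp_max (f₁ f₂ : E → ℝ≥0∞) (y : E) (v : ℝ) :
    persp (fun x => max (f₁ x) (f₂ x)) y v = max (persp f₁ y v) (persp f₂ y v) :=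
  mul_right_mono.map_max

lemma radSup_eq_biSup (f : E → ℝ≥0∞) (y : E) :
    radSup f y = ⨆ v ∈ perspSublevel f y, ENNReal.ofReal v := by
  refine iSup_congr fun v => ?_
  rcases lt_or_ge 0 v with hv | hv
  · simp only [hv, iSup_pos, perspSublevel, mem_ofPred_eq]
  · simp [hv, ENNReal.ofReal_of_nonpos hv]

lemma perspSublevel_ofReal_mul (f : E → ℝ≥0∞) (y : E) {c : ℝ} (hc : 0 < c) (v : ℝ) :
    v ∈ perspSublevel (fun x => ENNReal.ofReal c * f x) y ↔ c * v ∈ perspSublevel f (c • y) := by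
  simp only [perspSublevel, mem_ofPred_eq, persp_ofReal_mul f y hc]

lemma perspSublevel_min (f₁ f₂ : E → ℝ≥0∞) (y : E) :
    perspSublevel (fun x => min (f₁ x) (f₂ x)) y = perspSublevel f₁ y ∪ perspSublevel f₂ y := by
  ext v
  simp only [perspSublevel, mem_ofPred_eq, mem_union, persp_min, min_le_iff]

lemma perspSublevel_max (f₁ f₂ : E → ℝ≥0∞) (y : E) :
    perspSublevel (fun x => max (f₁ x) (f₂ x)) y = perspSublevel f₁ y ∩ perspSublevel f₂ y := by
  ext v
  simp only [perspSublevel, mem_ofPred_eq, mem_inter_iff, persp_max, max_le_iff]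

lemma isLowerSet_perspSublevel {f : E → ℝ≥0∞} {y : E}
    (hf : MonotoneOn (persp f y) (Ioi 0)) : IsLowerSet (perspSublevel f y) := by
  intro v w hwv hv
  rcases le_or_gt w 0 with hw | hw
  · simp [perspSublevel, persp_of_nonpos f y hw]
  · exact (hf hw (hw.trans_le hwv) hwv).trans hv

lemma radSup_ofReal_mul (f : E → ℝ≥0∞) {c : ℝ} (hc : 0 < c) (y : E) :
    radSup (fun x => ENNReal.ofReal c * f x) y = radSup f (c • y) / ENNReal.ofReal c := by
  have hc₀ : ENNReal.ofReal c ≠ 0 := ENNReal.ofReal_ne_zero_iff.mpr hc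
  simp only [radSup_eq_biSup, ENNReal.iSup_div]
  refine Eq.trans (iSup_congr fun v => ?_) ((mul_left_surjective₀ hc.ne').iSup_comp _)
  rw [perspSublevel_ofReal_mul f y hc, ENNReal.ofReal_mul hc.le, mul_comm (ENNReal.ofReal c),
    ENNReal.mul_div_cancel_right hc₀ ENNReal.ofReal_ne_top]

lemma radSup_comp_linearMap (f : E → ℝ≥0∞) (A : E' →ₗ[ℝ] E) (y : E') :
    radSup (fun x => f (A x)) y = radSup f (A y) := by
  simp only [radSup, persp_comp_linearMap]

lemma radSup_min (f₁ f₂ : E → ℝ≥0∞) (y : E) :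
    radSup (fun x => min (f₁ x) (f₂ x)) y = max (radSup f₁ y) (radSup f₂ y) := by
  simp only [radSup_eq_biSup, perspSublevel_min, iSup_union]

lemma radSup_max {f₁ f₂ : E → ℝ≥0∞} {y : E} (h₁ : MonotoneOn (persp f₁ y) (Ioi 0))
    (h₂ : MonotoneOn (persp f₂ y) (Ioi 0)) :
    radSup (fun x => max (f₁ x) (f₂ x)) y = min (radSup f₁ y) (radSup f₂ y) := by
  simp only [radSup_eq_biSup, perspSublevel_max]
  exact biSup_inter_eq_min_of_total
    ((isLowerSet_perspSublevel h₁).total (isLowerSet_perspSublevel h₂)) _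

end

theorem radial_transform_calculus_general
    {E' : Type*} [NormedAddCommGroup E'] [InnerProductSpace ℝ E']
    (f f₁ f₂ : E → ℝ≥0∞) (lam : ℝ) (hlam : 0 < lam) (A : E' →ₗ[ℝ] E) :
    (∀ y : E, radSup (fun x => ENNReal.ofReal lam * f x) y
        = radSup f (lam • y) / ENNReal.ofReal lam) ∧
    (radSup (fun x' => f (A x')) = fun y => radSup f (A y)) ∧
    (radSup (fun x => min (f₁ x) (f₂ x)) = fun y => max (radSup f₁ y) (radSup f₂ y)) ∧
    (UpperRadial f₁ → UpperRadial f₂ →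
      radSup (fun x => max (f₁ x) (f₂ x)) = fun y => min (radSup f₁ y) (radSup f₂ y)) :=
  ⟨radSup_ofReal_mul f hlam, funext (radSup_comp_linearMap f A), funext (radSup_min f₁ f₂),
    fun h₁ h₂ => funext fun y => radSup_max (h₁ y).1 (h₂ y).1⟩

/-- Calculus of the upper radial transformation: rescaling, linear composition, minimums,
and (for upper radial functions) maximums. -/
theorem radial_transform_calculus
    {E' : Type*} [NormedAddCommGroup E'] [InnerProductSpace ℝ E'] [FiniteDimensional ℝ E']
    (f f₁ f₂ : E → ℝ≥0∞) (lam : ℝ) (hlam : 0 < lam) (A : E' →ₗ[ℝ] E) :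
    (∀ y : E, radSup (fun x => ENNReal.ofReal lam * f x) y
        = radSup f (lam • y) / ENNReal.ofReal lam) ∧
    (radSup (fun x' => f (A x')) = fun y => radSup f (A y)) ∧
    (radSup (fun x => min (f₁ x) (f₂ x)) = fun y => max (radSup f₁ y) (radSup f₂ y)) ∧
    (UpperRadial f₁ → UpperRadial f₂ →
      radSup (fun x => max (f₁ x) (f₂ x)) = fun y => min (radSup f₁ y) (radSup f₂ y)) :=
  radial_transform_calculus_general f f₁ f₂ lam hlam A
end
end

section
/- If f : E → [0,∞] is lower semicontinuous and lower radial, then its upper radial transformation f^Γ is upper semicontinuous. Likewise, if f is upper semicontinuous and upper radial, then its lower radial transformation f_Γ is lower semicontinuous. -/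
open Set Filter Topology
open scoped ENNReal RealInnerProductSpace

noncomputable section

variable {E : Type*} [NormedAddCommGroup E] [InnerProductSpace ℝ E] [FiniteDimensional ℝ E]

/-- The epigraph `epi f = {(x,u) ∈ E × ℝ₊₊ : f(x) ≤ u}`. -/
def epiSet (f : E → ℝ≥0∞) : Set (E × ℝ) :=
  {p : E × ℝ | 0 < p.2 ∧ f p.1 ≤ ENNReal.ofReal p.2}

/-- `f` is upper semicontinuous: `hypo f` is closed relative to `E × ℝ₊₊`. -/
def UscFun (f : E → ℝ≥0∞) : Prop :=
  ∀ p ∈ closure (hypoSet f), 0 < p.2 → p ∈ hypoSet f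

/-- `f` is lower semicontinuous: `epi f` is closed relative to `E × ℝ₊₊`. -/
def LscFun (f : E → ℝ≥0∞) : Prop :=
  ∀ p ∈ closure (epiSet f), 0 < p.2 → p ∈ epiSet f

lemma persp_le_one_iff {f : E → ℝ≥0∞} {y : E} {v : ℝ} (hv : 0 < v) :
    persp f y v ≤ 1 ↔ f (v⁻¹ • y) ≤ ENNReal.ofReal v⁻¹ := by
  rw [persp, ENNReal.ofReal_inv_of_pos hv, ENNReal.mul_le_iff_le_inv
    (by simpa using hv) ENNReal.ofReal_ne_top, mul_one]

lemma one_le_persp_iff {f : E → ℝ≥0∞} {y : E} {v : ℝ} (hv : 0 < v) :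
    1 ≤ persp f y v ↔ ENNReal.ofReal v⁻¹ ≤ f (v⁻¹ • y) := by
  rw [persp, ENNReal.ofReal_inv_of_pos hv,
    ENNReal.inv_le_iff_le_mul (fun _ => (by simpa using hv)) (fun h => by
      simp [ENNReal.ofReal_ne_top] at h)]

lemma ofReal_le_radSup_iff {f : E → ℝ≥0∞} (hmono : ∀ y, MonotoneOn (persp f y) (Ioi (0:ℝ)))
    (y : E) {u : ℝ} (hu : 0 < u) :
    ENNReal.ofReal u ≤ radSup f y ↔ ∀ v : ℝ, 0 < v → v < u → persp f y v ≤ 1 := by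
  constructor
  · intro h v hv hvu
    have h1 : ENNReal.ofReal v < radSup f y :=
      lt_of_lt_of_le ((ENNReal.ofReal_lt_ofReal_iff hu).2 hvu) h
    rw [radSup, lt_iSup_iff] at h1
    obtain ⟨w, hw⟩ := h1
    rw [lt_iSup_iff] at hw
    obtain ⟨hw0, hw⟩ := hw
    rw [lt_iSup_iff] at hw
    obtain ⟨hw1, hw⟩ := hw
    have hvw : v ≤ w := ((ENNReal.ofReal_lt_ofReal_iff hw0).1 hw).le
    exact (hmono y (mem_Ioi.2 hv) (mem_Ioi.2 hw0) hvw).trans hw1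
  · intro h
    have ht : Tendsto (fun v : ℝ => ENNReal.ofReal v) (𝓝[<] u) (𝓝 (ENNReal.ofReal u)) :=
      (ENNReal.continuous_ofReal.tendsto u).mono_left nhdsWithin_le_nhds
    refine le_of_tendsto ht ?_
    filter_upwards [self_mem_nhdsWithin,
      eventually_nhdsWithin_of_eventually_nhds (eventually_gt_nhds hu)] with v hvu hv0
    have hp := h v hv0 hvu
    calc ENNReal.ofReal v
        ≤ ⨆ (_ : 0 < v) (_ : persp f y v ≤ 1), ENNReal.ofReal v := by simp [hv0, hp]
      _ ≤ radSup f y := le_iSup (fun v => ⨆ (_ : 0 < v) (_ : persp f y v ≤ 1), ENNReal.ofReal v) v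

lemma radInf_le_ofReal_iff {f : E → ℝ≥0∞} (hmono : ∀ y, MonotoneOn (persp f y) (Ioi (0:ℝ)))
    (y : E) {u : ℝ} (hu : 0 < u) :
    radInf f y ≤ ENNReal.ofReal u ↔ ∀ w : ℝ, u < w → 1 ≤ persp f y w := by
  constructor
  · intro h w huw
    have hw0 : 0 < w := hu.trans huw
    have h1 : radInf f y < ENNReal.ofReal w :=
      lt_of_le_of_lt h ((ENNReal.ofReal_lt_ofReal_iff hw0).2 huw)
    rw [radInf, iInf_lt_iff] at h1
    obtain ⟨v, hv⟩ := h1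
    rw [iInf_lt_iff] at hv
    obtain ⟨hv0, hv⟩ := hv
    rw [iInf_lt_iff] at hv
    obtain ⟨hv1, hv⟩ := hv
    have hvw : v ≤ w := ((ENNReal.ofReal_lt_ofReal_iff hw0).1 hv).le
    exact hv1.trans (hmono y (mem_Ioi.2 hv0) (mem_Ioi.2 hw0) hvw)
  · intro h
    have ht : Tendsto (fun v : ℝ => ENNReal.ofReal v) (𝓝[>] u) (𝓝 (ENNReal.ofReal u)) :=
      (ENNReal.continuous_ofReal.tendsto u).mono_left nhdsWithin_le_nhds
    refine ge_of_tendsto ht ?_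
    filter_upwards [self_mem_nhdsWithin] with w huw
    have hw0 : 0 < w := hu.trans huw
    have hp := h w huw
    calc radInf f y
        ≤ ⨅ (_ : 0 < w) (_ : 1 ≤ persp f y w), ENNReal.ofReal w :=
          iInf_le (fun v => ⨅ (_ : 0 < v) (_ : 1 ≤ persp f y v), ENNReal.ofReal v) w
      _ ≤ ENNReal.ofReal w := by simp [hw0, hp]
/-- If `f` is lower semicontinuous and lower radial, then `f^Γ` is upper semicontinuous;
if `f` is upper semicontinuous and upper radial, then `f_Γ` is lower semicontinuous. -/
theorem radial_semicontinuity (f : E → ℝ≥0∞) :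
    (LscFun f → LowerRadial f → UscFun (radSup f)) ∧
    (UscFun f → UpperRadial f → LscFun (radInf f)) := by
  have hmono₁ : True := trivial
  constructor
  · intro hlsc hrad p hp hp2
    have hmono : ∀ y, MonotoneOn (persp f y) (Ioi (0:ℝ)) := fun y => (hrad y).1
    refine ⟨hp2, ?_⟩
    rw [ofReal_le_radSup_iff hmono _ hp2]
    intro v hv hvu
    rw [persp_le_one_iff hv]
    have hvinv : 0 < v⁻¹ := inv_pos.2 hv
    -- get a sequence in hypoSet (radSup f) converging to p
    obtain ⟨x, hxmem, hxlim⟩ := mem_closure_iff_seq_limit.1 hp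
    have hmem : (v⁻¹ • p.1, v⁻¹) ∈ closure (epiSet f) := by
      have hlim : Tendsto (fun n => ((v⁻¹ • (x n).1 : E), v⁻¹)) atTop
          (𝓝 (v⁻¹ • p.1, v⁻¹)) := by
        refine Tendsto.prodMk_nhds ?_ tendsto_const_nhds
        exact (continuous_const_smul _).tendsto p.1 |>.comp
          ((continuous_fst.tendsto p).comp hxlim)
      refine mem_closure_of_tendsto hlim ?_
      have h2 : Tendsto (fun n => (x n).2) atTop (𝓝 p.2) :=
        (continuous_snd.tendsto p).comp hxlim
      filter_upwards [h2.eventually (eventually_gt_nhds hvu)] with n hn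
      have hx := hxmem n
      obtain ⟨hx0, hxr⟩ := hx
      have := (ofReal_le_radSup_iff hmono _ hx0).1 hxr v hv hn
      exact ⟨hvinv, (persp_le_one_iff hv).1 this⟩
    exact (hlsc _ hmem hvinv).2
  · intro husc hrad p hp hp2
    have hmono : ∀ y, MonotoneOn (persp f y) (Ioi (0:ℝ)) := fun y => (hrad y).1
    refine ⟨hp2, ?_⟩
    rw [radInf_le_ofReal_iff hmono _ hp2]
    intro w huw
    have hw0 : 0 < w := hp2.trans huw
    rw [one_le_persp_iff hw0]
    have hwinv : 0 < w⁻¹ := inv_pos.2 hw0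
    obtain ⟨x, hxmem, hxlim⟩ := mem_closure_iff_seq_limit.1 hp
    have hmem : (w⁻¹ • p.1, w⁻¹) ∈ closure (hypoSet f) := by
      have hlim : Tendsto (fun n => ((w⁻¹ • (x n).1 : E), w⁻¹)) atTop
          (𝓝 (w⁻¹ • p.1, w⁻¹)) := by
        refine Tendsto.prodMk_nhds ?_ tendsto_const_nhds
        exact (continuous_const_smul _).tendsto p.1 |>.comp
          ((continuous_fst.tendsto p).comp hxlim)
      refine mem_closure_of_tendsto hlim ?_
      have h2 : Tendsto (fun n => (x n).2) atTop (𝓝 p.2) :=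
        (continuous_snd.tendsto p).comp hxlim
      filter_upwards [h2.eventually (eventually_lt_nhds huw)] with n hn
      obtain ⟨hx0, hxr⟩ := hxmem n
      have := (radInf_le_ofReal_iff hmono _ hx0).1 hxr w hn
      exact ⟨hwinv, (one_le_persp_iff hw0).1 this⟩
    exact (husc _ hmem hwinv).2
end
end

section
/- If f : E → [0,∞] is concave, then both f^Γ and f_Γ are convex. Likewise, if f is convex, then both f^Γ and f_Γ are concave. -/
/-!
The involution `(y, v) ↦ (y / v, 1 / v)` of `E × ℝ₊₊` maps segments onto segments, so it
preserves convexity. It carries `{v · f(y/v) ≥ 1}` onto `hypo f` and `{v · f(y/v) ≤ 1}` onto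
`epi f`, and the strict versions onto the strict hypograph and epigraph, whose convexity is
equivalent to that of the non-strict ones. The epigraphs and hypographs of `f^Γ` and `f_Γ`
(strict or not) are obtained from these four sets by sweeping in the `v`-direction
(`∀ v > u`, `∀ v ∈ (0, u)`, `∃ v > u`, `∃ v ∈ (0, u)`), which also preserves convexity.
-/

open Set
open scoped ENNReal RealInnerProductSpace

noncomputable section

variable {E : Type*} [NormedAddCommGroup E] [InnerProductSpace ℝ E] [FiniteDimensional ℝ E]

section ProdConvex

variable {𝕜 V : Type*} [Field 𝕜] [LinearOrder 𝕜] [IsStrictOrderedRing 𝕜]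
  [AddCommGroup V] [Module 𝕜 V] {T : Set (V × 𝕜)}

theorem Convex.setOf_forall_Ioi_mem (hT : Convex 𝕜 T) :
    Convex 𝕜 {p : V × 𝕜 | 0 < p.2 ∧ ∀ v ∈ Ioi p.2, (p.1, v) ∈ T} := by
  rintro ⟨y₁, u₁⟩ ⟨hu₁, h₁⟩ ⟨y₂, u₂⟩ ⟨hu₂, h₂⟩ a b ha hb hab
  refine ⟨(convex_Ioi 0) hu₁ hu₂ ha hb hab, fun v hv => ?_⟩
  simp only [Prod.smul_mk, Prod.mk_add_mk, smul_eq_mul, mem_Ioi] at hv ⊢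
  obtain ⟨δ, hδ, rfl⟩ : ∃ δ > 0, v = a * u₁ + b * u₂ + δ := ⟨_, sub_pos.2 hv, by ring⟩
  convert hT (h₁ (u₁ + δ) (lt_add_of_pos_right _ hδ)) (h₂ (u₂ + δ) (lt_add_of_pos_right _ hδ))
    ha hb hab using 1
  ext
  · simp
  · simp only [Prod.snd_add, Prod.smul_snd, smul_eq_mul]
    linear_combination -δ * hab

theorem Convex.setOf_forall_Ioo_mem (hT : Convex 𝕜 T) :
    Convex 𝕜 {p : V × 𝕜 | 0 < p.2 ∧ ∀ v ∈ Ioo 0 p.2, (p.1, v) ∈ T} := by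
  rintro ⟨y₁, u₁⟩ ⟨hu₁, h₁⟩ ⟨y₂, u₂⟩ ⟨hu₂, h₂⟩ a b ha hb hab
  have hu : 0 < a * u₁ + b * u₂ := (convex_Ioi 0) hu₁ hu₂ ha hb hab
  refine ⟨hu, fun v hv => ?_⟩
  simp only [Prod.smul_mk, Prod.mk_add_mk, smul_eq_mul] at hv ⊢
  set θ := v / (a * u₁ + b * u₂)
  have hθ : θ ∈ Ioo 0 1 := ⟨div_pos hv.1 hu, (div_lt_one hu).2 hv.2⟩
  convert hT (h₁ (θ * u₁) ⟨mul_pos hθ.1 hu₁, mul_lt_of_lt_one_left hu₁ hθ.2⟩)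
    (h₂ (θ * u₂) ⟨mul_pos hθ.1 hu₂, mul_lt_of_lt_one_left hu₂ hθ.2⟩) ha hb hab using 1
  ext
  · simp
  · simp only [Prod.snd_add, Prod.smul_snd, smul_eq_mul, θ]
    field_simp

theorem Convex.setOf_exists_Ioo_mem (hT : Convex 𝕜 T) :
    Convex 𝕜 {p : V × 𝕜 | ∃ v ∈ Ioo 0 p.2, (p.1, v) ∈ T} := by
  rintro ⟨y₁, u₁⟩ ⟨v₁, ⟨hv₁, hvu₁⟩, h₁⟩ ⟨y₂, u₂⟩ ⟨v₂, ⟨hv₂, hvu₂⟩, h₂⟩ a b ha hb hab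
  have hpos : 0 < a * v₁ + b * v₂ := (convex_Ioi 0) hv₁ hv₂ ha hb hab
  have hgap : 0 < a * (u₁ - v₁) + b * (u₂ - v₂) :=
    (convex_Ioi 0) (sub_pos.2 hvu₁) (sub_pos.2 hvu₂) ha hb hab
  simp only [Prod.smul_mk, Prod.mk_add_mk, smul_eq_mul, mem_ofPred_eq]
  exact ⟨a * v₁ + b * v₂, ⟨hpos, by linarith⟩, hT h₁ h₂ ha hb hab⟩

theorem Convex.setOf_exists_Ioi_mem (hT : Convex 𝕜 T) :
    Convex 𝕜 {p : V × 𝕜 | 0 < p.2 ∧ ∃ v ∈ Ioi p.2, (p.1, v) ∈ T} := by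
  rintro ⟨y₁, u₁⟩ ⟨hu₁, v₁, huv₁, h₁⟩ ⟨y₂, u₂⟩ ⟨hu₂, v₂, huv₂, h₂⟩ a b ha hb hab
  have hgap : 0 < a * (v₁ - u₁) + b * (v₂ - u₂) :=
    (convex_Ioi 0) (sub_pos.2 huv₁) (sub_pos.2 huv₂) ha hb hab
  simp only [Prod.smul_mk, Prod.mk_add_mk, smul_eq_mul, mem_ofPred_eq, mem_Ioi]
  exact ⟨(convex_Ioi 0) hu₁ hu₂ ha hb hab, a * v₁ + b * v₂, by linarith, hT h₁ h₂ ha hb hab⟩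

def perspectivePreimage (T : Set (V × 𝕜)) : Set (V × 𝕜) :=
  {p | 0 < p.2 ∧ (p.2⁻¹ • p.1, p.2⁻¹) ∈ T}

theorem Convex.perspectivePreimage (hT : Convex 𝕜 T) : Convex 𝕜 (perspectivePreimage T) := by
  rintro ⟨y₁, v₁⟩ ⟨hv₁, h₁⟩ ⟨y₂, v₂⟩ ⟨hv₂, h₂⟩ a b ha hb hab
  have hv : 0 < a * v₁ + b * v₂ := (convex_Ioi 0) hv₁ hv₂ ha hb hab
  refine ⟨hv, ?_⟩
  -- on the image side the weights `a, b` become `a v₁, b v₂`, renormalised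
  convert hT h₁ h₂ (by positivity : 0 ≤ a * v₁ / (a * v₁ + b * v₂))
    (by positivity : 0 ≤ b * v₂ / (a * v₁ + b * v₂)) (by field_simp) using 1
  ext
  · simp only [Prod.smul_mk, Prod.mk_add_mk, smul_eq_mul, smul_add, smul_smul]
    congr 2 <;> field_simp
  · simp only [Prod.smul_mk, Prod.mk_add_mk, smul_eq_mul]
    field_simp
    exact hab.symm

end ProdConvex

theorem ENNReal.lt_ofReal_iff_exists_Ioo {a : ℝ≥0∞} {u : ℝ} :
    a < ENNReal.ofReal u ↔ ∃ v ∈ Ioo 0 u, a ≤ ENNReal.ofReal v := by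
  constructor
  · intro h
    obtain ⟨v, -, hav, hvu⟩ := ENNReal.lt_iff_exists_real_btwn.1 h
    exact ⟨v, ⟨ENNReal.ofReal_pos.1 (pos_of_gt hav), (ENNReal.ofReal_lt_ofReal_iff'.1 hvu).1⟩,
      hav.le⟩
  · rintro ⟨v, hv, hav⟩
    exact hav.trans_lt ((ENNReal.ofReal_lt_ofReal_iff (hv.1.trans hv.2)).2 hv.2)

theorem ENNReal.ofReal_lt_iff_exists_Ioi {a : ℝ≥0∞} {u : ℝ} (hu : 0 ≤ u) :
    ENNReal.ofReal u < a ↔ ∃ v ∈ Ioi u, ENNReal.ofReal v ≤ a := by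
  constructor
  · intro h
    obtain ⟨v, -, huv, hva⟩ := ENNReal.lt_iff_exists_real_btwn.1 h
    exact ⟨v, (ENNReal.ofReal_lt_ofReal_iff'.1 huv).1, hva.le⟩
  · rintro ⟨v, hv, hva⟩
    exact ((ENNReal.ofReal_lt_ofReal_iff (hu.trans_lt hv)).2 hv).trans_le hva

section Graphs

variable {X : Type*} {g : X → ℝ≥0∞}

def strictEpiSet (g : X → ℝ≥0∞) : Set (X × ℝ) :=
  {p | 0 < p.2 ∧ g p.1 < ENNReal.ofReal p.2}

def strictHypoSet (g : X → ℝ≥0∞) : Set (X × ℝ) :=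
  {p | 0 < p.2 ∧ ENNReal.ofReal p.2 < g p.1}

theorem strictEpiSet_eq : strictEpiSet g = {p | ∃ v ∈ Ioo 0 p.2, (p.1, v) ∈ epiSet g} := by
  ext ⟨x, u⟩
  simp only [strictEpiSet, epiSet, mem_ofPred_eq, ENNReal.lt_ofReal_iff_exists_Ioo]
  exact ⟨fun ⟨_, v, hv, h⟩ => ⟨v, hv, hv.1, h⟩,
    fun ⟨v, hv, _, h⟩ => ⟨hv.1.trans hv.2, v, hv, h⟩⟩

theorem strictHypoSet_eq :
    strictHypoSet g = {p | 0 < p.2 ∧ ∃ v ∈ Ioi p.2, (p.1, v) ∈ hypoSet g} := by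
  ext ⟨x, u⟩
  simp only [strictHypoSet, hypoSet, mem_ofPred_eq]
  refine and_congr_right fun hu => ?_
  rw [ENNReal.ofReal_lt_iff_exists_Ioi hu.le]
  exact ⟨fun ⟨v, hv, h⟩ => ⟨v, hv, hu.trans hv, h⟩, fun ⟨v, hv, _, h⟩ => ⟨v, hv, h⟩⟩

theorem epiSet_eq :
    epiSet g = {p | 0 < p.2 ∧ ∀ v ∈ Ioi p.2, (p.1, v) ∈ strictEpiSet g} := by
  ext ⟨x, u⟩
  simp only [strictEpiSet, epiSet, mem_ofPred_eq]
  refine and_congr_right fun hu => ?_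
  rw [← not_lt, ENNReal.ofReal_lt_iff_exists_Ioi hu.le]
  push Not
  exact ⟨fun h v hv => ⟨hu.trans hv, h v hv⟩, fun h v hv => (h v hv).2⟩

theorem hypoSet_eq :
    hypoSet g = {p | 0 < p.2 ∧ ∀ v ∈ Ioo 0 p.2, (p.1, v) ∈ strictHypoSet g} := by
  ext ⟨x, u⟩
  simp only [strictHypoSet, hypoSet, mem_ofPred_eq]
  refine and_congr_right fun hu => ?_
  rw [← not_lt, ENNReal.lt_ofReal_iff_exists_Ioo]
  push Not
  exact ⟨fun h v hv => ⟨hv.1, h v hv⟩, fun h v hv => (h v hv).2⟩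

variable [AddCommGroup X] [Module ℝ X]

theorem convex_strictEpiSet_iff : Convex ℝ (strictEpiSet g) ↔ Convex ℝ (epiSet g) :=
  ⟨fun h => epiSet_eq (g := g) ▸ h.setOf_forall_Ioi_mem,
    fun h => strictEpiSet_eq (g := g) ▸ h.setOf_exists_Ioo_mem⟩

theorem convex_strictHypoSet_iff : Convex ℝ (strictHypoSet g) ↔ Convex ℝ (hypoSet g) :=
  ⟨fun h => hypoSet_eq (g := g) ▸ h.setOf_forall_Ioo_mem,
    fun h => strictHypoSet_eq (g := g) ▸ h.setOf_exists_Ioi_mem⟩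

end Graphs

section Radial

variable {F : Type*} [NormedAddCommGroup F] [InnerProductSpace ℝ F] {f : F → ℝ≥0∞}

theorem mem_perspectivePreimage_hypoSet {y : F} {v : ℝ} :
    (y, v) ∈ perspectivePreimage (hypoSet f) ↔ 0 < v ∧ 1 ≤ persp f y v := by
  simp only [perspectivePreimage, hypoSet, mem_ofPred_eq, inv_pos, persp]
  refine and_congr_right fun hv => ?_
  rw [and_iff_right hv, ENNReal.ofReal_inv_of_pos hv,
    ENNReal.inv_le_iff_le_mul (fun _ => (ENNReal.ofReal_pos.2 hv).ne') (by simp)]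

theorem mem_perspectivePreimage_epiSet {y : F} {v : ℝ} :
    (y, v) ∈ perspectivePreimage (epiSet f) ↔ 0 < v ∧ persp f y v ≤ 1 := by
  simp only [perspectivePreimage, epiSet, mem_ofPred_eq, inv_pos, persp]
  refine and_congr_right fun hv => ?_
  rw [and_iff_right hv, ENNReal.ofReal_inv_of_pos hv, ENNReal.le_inv_iff_mul_le, mul_comm]

theorem mem_perspectivePreimage_strictHypoSet {y : F} {v : ℝ} :
    (y, v) ∈ perspectivePreimage (strictHypoSet f) ↔ 0 < v ∧ 1 < persp f y v := by
  simp only [perspectivePreimage, strictHypoSet, mem_ofPred_eq, inv_pos, persp]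
  refine and_congr_right fun hv => ?_
  rw [and_iff_right hv, ENNReal.ofReal_inv_of_pos hv, ← not_le, ← not_le,
    ENNReal.le_inv_iff_mul_le, mul_comm]

theorem mem_perspectivePreimage_strictEpiSet {y : F} {v : ℝ} :
    (y, v) ∈ perspectivePreimage (strictEpiSet f) ↔ 0 < v ∧ persp f y v < 1 := by
  simp only [perspectivePreimage, strictEpiSet, mem_ofPred_eq, inv_pos, persp]
  refine and_congr_right fun hv => ?_
  rw [and_iff_right hv, ENNReal.ofReal_inv_of_pos hv, ← not_le, ← not_le,
    ENNReal.inv_le_iff_le_mul (fun _ => (ENNReal.ofReal_pos.2 hv).ne') (by simp)]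

theorem epiSet_radSup : epiSet (radSup f) =
    {p | 0 < p.2 ∧ ∀ v ∈ Ioi p.2, (p.1, v) ∈ perspectivePreimage (strictHypoSet f)} := by
  ext ⟨y, u⟩
  simp only [epiSet, radSup, mem_ofPred_eq, mem_perspectivePreimage_strictHypoSet, iSup_le_iff]
  refine and_congr_right fun hu => ?_
  simp only [ENNReal.ofReal_le_ofReal_iff hu.le]
  exact ⟨fun h v (hv : u < v) =>
      ⟨hu.trans hv, lt_of_not_ge fun hp => (h v (hu.trans hv) hp).not_gt hv⟩,
    fun h v hv hp => le_of_not_gt fun huv => (h v huv).2.not_ge hp⟩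

theorem strictEpiSet_radInf : strictEpiSet (radInf f) =
    {p | ∃ v ∈ Ioo 0 p.2, (p.1, v) ∈ perspectivePreimage (hypoSet f)} := by
  ext ⟨y, u⟩
  simp only [strictEpiSet, radInf, mem_ofPred_eq, mem_perspectivePreimage_hypoSet, iInf_lt_iff,
    exists_prop, ENNReal.ofReal_lt_ofReal_iff']
  exact ⟨fun ⟨_, v, hv, hp, hvu, _⟩ => ⟨v, ⟨hv, hvu⟩, hv, hp⟩,
    fun ⟨v, hv, _, hp⟩ => ⟨hv.1.trans hv.2, v, hv.1, hp, hv.2, hv.1.trans hv.2⟩⟩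

theorem hypoSet_radInf : hypoSet (radInf f) =
    {p | 0 < p.2 ∧ ∀ v ∈ Ioo 0 p.2, (p.1, v) ∈ perspectivePreimage (strictEpiSet f)} := by
  ext ⟨y, u⟩
  simp only [hypoSet, radInf, mem_ofPred_eq, mem_perspectivePreimage_strictEpiSet, le_iInf_iff]
  refine and_congr_right fun _ => ?_
  exact ⟨fun h v hv => ⟨hv.1, lt_of_not_ge fun hp =>
      ((ENNReal.ofReal_le_ofReal_iff hv.1.le).1 (h v hv.1 hp)).not_gt hv.2⟩,
    fun h v hv hp => (ENNReal.ofReal_le_ofReal_iff hv.le).2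
      (le_of_not_gt fun hvu => (h v ⟨hv, hvu⟩).2.not_ge hp)⟩

theorem strictHypoSet_radSup : strictHypoSet (radSup f) =
    {p | 0 < p.2 ∧ ∃ v ∈ Ioi p.2, (p.1, v) ∈ perspectivePreimage (epiSet f)} := by
  ext ⟨y, u⟩
  simp only [strictHypoSet, radSup, mem_ofPred_eq, mem_perspectivePreimage_epiSet, lt_iSup_iff,
    exists_prop]
  refine and_congr_right fun _ => ?_
  exact ⟨fun ⟨v, hv, hp, huv⟩ => ⟨v, (ENNReal.ofReal_lt_ofReal_iff hv).1 huv, hv, hp⟩,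
    fun ⟨v, huv, hv, hp⟩ => ⟨v, hv, hp, (ENNReal.ofReal_lt_ofReal_iff hv).2 huv⟩⟩

end Radial

/-- If `f` is concave (`hypo f` convex), then `f^Γ` and `f_Γ` are convex (epigraphs convex);
if `f` is convex (`epi f` convex), then `f^Γ` and `f_Γ` are concave (hypographs convex). -/
theorem radial_concave_convex (f : E → ℝ≥0∞) :
    (Convex ℝ (hypoSet f) →
      Convex ℝ (epiSet (radSup f)) ∧ Convex ℝ (epiSet (radInf f))) ∧
    (Convex ℝ (epiSet f) →
      Convex ℝ (hypoSet (radSup f)) ∧ Convex ℝ (hypoSet (radInf f))) := by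
  refine ⟨fun hf => ⟨?_, ?_⟩, fun hf => ⟨?_, ?_⟩⟩
  · rw [epiSet_radSup]
    exact (convex_strictHypoSet_iff.2 hf).perspectivePreimage.setOf_forall_Ioi_mem
  · rw [← convex_strictEpiSet_iff, strictEpiSet_radInf]
    exact hf.perspectivePreimage.setOf_exists_Ioo_mem
  · rw [← convex_strictHypoSet_iff, strictHypoSet_radSup]
    exact hf.perspectivePreimage.setOf_exists_Ioi_mem
  · rw [hypoSet_radInf]
    exact (convex_strictEpiSet_iff.2 hf).perspectivePreimage.setOf_forall_Ioo_mem
end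
end

section
/- For any continuous, strictly radial f : E → [0,∞], graph f^Γ = Γ(graph f), where graph f = {(x,u) ∈ E × ℝ₊₊ : f(x) = u}. In particular, if y ∈ dom f^Γ then y / f^Γ(y) ∈ dom f. -/
open Set
open scoped ENNReal RealInnerProductSpace Topology

noncomputable section

variable {E : Type*} [NormedAddCommGroup E] [InnerProductSpace ℝ E] [FiniteDimensional ℝ E]

/-- The graph `graph f = {(x,u) ∈ E × ℝ₊₊ : f(x) = u}`. -/
def graphSet (f : E → ℝ≥0∞) : Set (E × ℝ) :=
  {p : E × ℝ | 0 < p.2 ∧ f p.1 = ENNReal.ofReal p.2}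

private lemma persp_eq_one_iff (f : E → ℝ≥0∞) {y : E} {w : ℝ} (hw : 0 < w) :
    persp f y w = 1 ↔ f (w⁻¹ • y) = ENNReal.ofReal w⁻¹ := by
  have hc0 : ENNReal.ofReal w ≠ 0 := (ENNReal.ofReal_pos.2 hw).ne'
  have hct : ENNReal.ofReal w ≠ ⊤ := ENNReal.ofReal_ne_top
  rw [ENNReal.ofReal_inv_of_pos hw]
  simp only [persp]
  constructor
  · intro h
    exact ENNReal.eq_inv_of_mul_eq_one_left (by rwa [mul_comm] at h)
  · intro h
    rw [h, ENNReal.mul_inv_cancel hc0 hct]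

private lemma radSup_eq_of_persp_eq_one (f : E → ℝ≥0∞)
    (hmono : ∀ y : E, MonotoneOn (persp f y) (Ioi (0 : ℝ)))
    (hstrict : ∀ y : E, StrictMonoOn (persp f y)
      {v : ℝ | 0 < v ∧ 0 < persp f y v ∧ persp f y v ≠ ⊤})
    {y : E} {w : ℝ} (hw : 0 < w) (h1 : persp f y w = 1) :
    radSup f y = ENNReal.ofReal w := by
  apply le_antisymm
  · refine iSup₂_le fun v hv => iSup_le fun hle => ENNReal.ofReal_le_ofReal ?_
    by_contra hvw
    push_neg at hvw
    have hwmem : w ∈ {v : ℝ | 0 < v ∧ 0 < persp f y v ∧ persp f y v ≠ ⊤} :=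
      ⟨hw, by rw [h1]; exact one_pos, by rw [h1]; exact ENNReal.one_ne_top⟩
    have hge : (1 : ℝ≥0∞) ≤ persp f y v :=
      h1 ▸ hmono y (mem_Ioi.2 hw) (mem_Ioi.2 (hw.trans hvw)) hvw.le
    have hvmem : v ∈ {v : ℝ | 0 < v ∧ 0 < persp f y v ∧ persp f y v ≠ ⊤} :=
      ⟨hw.trans hvw, lt_of_lt_of_le one_pos hge,
        fun ht => by rw [ht] at hle; exact absurd hle (by simp)⟩
    have := hstrict y hwmem hvmem hvw
    rw [h1] at this
    exact absurd hle (not_le.2 this)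
  · exact le_iSup_of_le w (le_iSup_of_le hw (le_iSup_of_le h1.le le_rfl))

private lemma persp_eq_one_of_radSup (f : E → ℝ≥0∞)
    (hmono : ∀ y : E, MonotoneOn (persp f y) (Ioi (0 : ℝ)))
    (hcont : ∀ y : E, ContinuousOn (persp f y) (Ioi (0 : ℝ)))
    {y : E} {w : ℝ} (hw : 0 < w)
    (h : radSup f y = ENNReal.ofReal w) : persp f y w = 1 := by
  have hlt : ∀ v, 0 < v → v < w → persp f y v ≤ 1 := by
    intro v hv hvw
    by_contra hgt
    push_neg at hgt
    have hle : radSup f y ≤ ENNReal.ofReal v := by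
      refine iSup₂_le fun v' hv' => iSup_le fun hle' => ENNReal.ofReal_le_ofReal ?_
      by_contra hvv
      push_neg at hvv
      have := hmono y (mem_Ioi.2 hv) (mem_Ioi.2 (hv.trans hvv)) hvv.le
      exact absurd (hgt.trans_le this) (not_lt.2 hle')
    rw [h] at hle
    have := (ENNReal.ofReal_le_ofReal_iff hv.le).1 hle
    linarith
  have hca : ContinuousAt (persp f y) w :=
    (hcont y).continuousAt (isOpen_Ioi.mem_nhds (mem_Ioi.2 hw))
  have hle1 : persp f y w ≤ 1 := by
    have hnb : (𝓝[Ioo (0 : ℝ) w] w).NeBot := by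
      refine mem_closure_iff_nhdsWithin_neBot.1 ?_
      rw [closure_Ioo hw.ne]
      exact right_mem_Icc.2 hw.le
    refine le_of_tendsto (hca.tendsto.mono_left (nhdsWithin_le_nhds (s := Ioo (0 : ℝ) w))) ?_
    exact eventually_mem_nhdsWithin.mono fun v hv => hlt v hv.1 hv.2
  rcases lt_or_ge (persp f y w) 1 with hlt1 | hge1
  · exfalso
    have hev : ∀ᶠ v in 𝓝 w, persp f y v < 1 :=
      hca (isOpen_Iio.mem_nhds hlt1)
    obtain ⟨v, hv1, hvw⟩ :=
      ((hev.filter_mono (nhdsWithin_le_nhds (s := Ioi w))).and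
        eventually_mem_nhdsWithin).exists
    have hle : ENNReal.ofReal v ≤ radSup f y :=
      le_iSup_of_le v (le_iSup_of_le (hw.trans hvw) (le_iSup_of_le hv1.le le_rfl))
    rw [h] at hle
    have := (ENNReal.ofReal_le_ofReal_iff hw.le).1 hle
    exact absurd hvw (not_lt.2 this)
  · exact le_antisymm hle1 hge1

/-- For continuous, strictly radial `f`, `graph f^Γ = Γ(graph f)`; in particular,
`y ∈ dom f^Γ` implies `y / f^Γ(y) ∈ dom f`. -/
theorem graph_bijection (f : E → ℝ≥0∞)
    (hf : Continuous f)
    (hmono : ∀ y : E, MonotoneOn (persp f y) (Ioi (0 : ℝ)))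
    (hcont : ∀ y : E, ContinuousOn (persp f y) (Ioi (0 : ℝ)))
    (hstrict : ∀ y : E, StrictMonoOn (persp f y)
      {v : ℝ | 0 < v ∧ 0 < persp f y v ∧ persp f y v ≠ ⊤}) :
    graphSet (radSup f) = radialSet (graphSet f) ∧
    ∀ y ∈ effDom (radSup f), ((radSup f y).toReal)⁻¹ • y ∈ effDom f := by
  constructor
  · ext p
    constructor
    · rintro ⟨hp2, hpeq⟩
      have h1 : persp f p.1 p.2 = 1 := persp_eq_one_of_radSup f hmono hcont hp2 hpeq
      have hfx : f (p.2⁻¹ • p.1) = ENNReal.ofReal p.2⁻¹ := (persp_eq_one_iff f hp2).1 h1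
      refine ⟨(p.2⁻¹ • p.1, p.2⁻¹), ⟨inv_pos.2 hp2, hfx⟩, ?_⟩
      simp [radialPoint, smul_smul, mul_inv_cancel₀ hp2.ne']
    · rintro ⟨⟨x, u⟩, ⟨hu, hfx⟩, rfl⟩
      simp only [radialPoint] at *
      refine ⟨inv_pos.2 hu, ?_⟩
      refine radSup_eq_of_persp_eq_one f hmono hstrict (inv_pos.2 hu) ?_
      rw [persp_eq_one_iff f (inv_pos.2 hu)]
      simpa [smul_smul, inv_inv, mul_inv_cancel₀ hu.ne'] using hfx
  · intro y hy
    have ht : 0 < (radSup f y).toReal := ENNReal.toReal_pos hy.1 hy.2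
    have h' : radSup f y = ENNReal.ofReal (radSup f y).toReal :=
      (ENNReal.ofReal_toReal hy.2).symm
    have h1 : persp f y (radSup f y).toReal = 1 :=
      persp_eq_one_of_radSup f hmono hcont ht h'
    have hfx := (persp_eq_one_iff f ht).1 h1
    exact ⟨by rw [hfx]; exact (ENNReal.ofReal_pos.2 (inv_pos.2 ht)).ne',
      by rw [hfx]; exact ENNReal.ofReal_ne_top⟩
end
end
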